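/- arXiv:2511.08385 — 6 statements merged into one kernel-verified Lean document; each statement's English description precedes it below -/
import Mathlib

section
/- For every degree d ≥ 2, diameter D ≥ 1, and every k with 1 ≤ k ≤ D, the following identity holds in the Kautz digraphs: σ_{k+1}(d, D+1) = d² · σ_k(d, D) − ρ_k(d, D). That is, the number of ordered pairs of vertices at directed distance exactly k+1 in K(d, D+1) equals d² times the number of ordered pairs at directed distance exactly k in K(d, D), minus the number of edges of K(d, D) whose shortest directed cycle has length k+1. -/
/-!
`K(d, D + 1)` is the line digraph of `K(d, D)`: a word of length `D + 2` is the arc from its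
first to its last `D + 1` letters, and `w → w'` exactly when the arc `w` ends where the arc `w'`
starts. Hence for `w ≠ w'` the distance from `w` to `w'` is one more than the distance from the
end of `w` to the start of `w'`. As all in- and out-degrees of `K(d, D)` equal `d`, the pairs of
arcs `(a → x, y → b)` with `dist(x, y) = k` number `d² σ_k(d, D)`; the diagonal ones among them
are the arcs `a → b` with `dist(b, a) = k`, i.e. those whose shortest cycle has length `k + 1`.
-/

/-- A Kautz word: a sequence with no two consecutive letters equal. -/
def IsKautzWord (d n : ℕ) (w : Fin n → Fin (d + 1)) : Prop :=
  ∀ (i : ℕ) (h : i + 1 < n), w ⟨i, Nat.lt_of_succ_lt h⟩ ≠ w ⟨i + 1, h⟩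

/-- Vertices of the Kautz digraph `K(d, D)`: Kautz words of length `D+1`. -/
def KautzVertex (d D : ℕ) : Type :=
  { w : Fin (D + 1) → Fin (d + 1) // IsKautzWord d (D + 1) w }

/-- Adjacency in `K(d, D)`: `v` is obtained from `u` by a left shift and
appending a new last letter (automatically distinct since `v` is a Kautz word). -/
def KautzAdj (d D : ℕ) (u v : KautzVertex d D) : Prop :=
  ∀ i : Fin D, v.1 i.castSucc = u.1 i.succ

/-- A directed walk of length `m` from `u` to `v` exists. -/
def HasWalk {V : Type*} (Adj : V → V → Prop) : ℕ → V → V → Prop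
  | 0, u, v => u = v
  | m + 1, u, v => ∃ w, Adj u w ∧ HasWalk Adj m w v

/-- Directed distance: minimum length of a directed walk. -/
noncomputable def ddist {V : Type*} (Adj : V → V → Prop) (u v : V) : ℕ :=
  sInf {m | HasWalk Adj m u v}

/-- A directed cycle of length `L` through the arc `u → v`: a closed walk of
length `L` with pairwise distinct vertices traversing the arc `u → v`. -/
def IsCycleThroughEdge {V : Type*} (Adj : V → V → Prop) (u v : V) (L : ℕ) : Prop :=
  0 < L ∧ ∃ c : ZMod L → V, Function.Injective c ∧
    (∀ i, Adj (c i) (c (i + 1))) ∧ c 0 = u ∧ c 1 = v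

/-- Length of the shortest directed cycle through the arc `u → v`. -/
noncomputable def cycleLen {V : Type*} (Adj : V → V → Prop) (u v : V) : ℕ :=
  sInf {L | IsCycleThroughEdge Adj u v L}

/-- `ρ_k(d, D)`: number of edges of `K(d, D)` whose shortest cycle has length `k+1`. -/
noncomputable def rho (d D k : ℕ) : ℕ :=
  Nat.card {p : KautzVertex d D × KautzVertex d D //
    KautzAdj d D p.1 p.2 ∧ cycleLen (KautzAdj d D) p.1 p.2 = k + 1}

/-- `σ_k(d, D)`: number of ordered pairs of distinct vertices at distance exactly `k`. -/
noncomputable def sigma (d D k : ℕ) : ℕ :=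
  Nat.card {p : KautzVertex d D × KautzVertex d D //
    p.1 ≠ p.2 ∧ ddist (KautzAdj d D) p.1 p.2 = k}

section Digraph

variable {V : Type*} {A : V → V → Prop}

theorem hasWalk_iff_exists_fun {m : ℕ} {u v : V} :
    HasWalk A m u v ↔ ∃ f : ℕ → V, f 0 = u ∧ f m = v ∧ ∀ i < m, A (f i) (f (i + 1)) := by
  induction m generalizing u with
  | zero => exact ⟨fun h => ⟨fun _ => u, rfl, h, by simp⟩, fun ⟨f, h0, hm, _⟩ => h0 ▸ hm⟩
  | succ m ih =>
    constructor
    · rintro ⟨w, huw, hw⟩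
      obtain ⟨g, hg0, hgm, hg⟩ := ih.mp hw
      refine ⟨fun | 0 => u | t + 1 => g t, rfl, hgm, ?_⟩
      rintro (_ | i) hi
      · simpa [hg0] using huw
      · exact hg i (by omega)
    · rintro ⟨f, h0, hm, hf⟩
      exact ⟨f 1, h0 ▸ hf 0 m.succ_pos,
        ih.mpr ⟨fun t => f (t + 1), rfl, hm, fun i hi => hf (i + 1) (by omega)⟩⟩

theorem HasWalk.append {m n : ℕ} {u x v : V} (h₁ : HasWalk A m u x) (h₂ : HasWalk A n x v) :
    HasWalk A (m + n) u v := by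
  induction m generalizing u with
  | zero => exact (Nat.zero_add n).symm ▸ (h₁ : u = x) ▸ h₂
  | succ m ih =>
    obtain ⟨w, huw, hw⟩ := h₁
    exact (Nat.succ_add m n).symm ▸ ⟨w, huw, ih hw⟩

theorem hasWalk_of_fun_segment {m i j : ℕ} (f : ℕ → V) (hf : ∀ t < m, A (f t) (f (t + 1)))
    (hij : i ≤ j) (hjm : j ≤ m) : HasWalk A (j - i) (f i) (f j) :=
  hasWalk_iff_exists_fun.mpr ⟨fun t => f (i + t), rfl, by simp only [Nat.add_sub_cancel' hij],
    fun t ht => hf (i + t) (by omega)⟩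

theorem ne_of_hasWalk_minimal {m : ℕ} {u v : V} (hmin : ∀ n < m, ¬ HasWalk A n u v)
    (f : ℕ → V) (h0 : f 0 = u) (hm : f m = v) (hf : ∀ t < m, A (f t) (f (t + 1)))
    ⦃i j : ℕ⦄ (hij : i < j) (hjm : j ≤ m) : f i ≠ f j := by
  intro hfij
  have hpre := hasWalk_of_fun_segment f hf (Nat.zero_le i) (by omega)
  have hsuf := hasWalk_of_fun_segment f hf hjm le_rfl
  rw [h0, Nat.sub_zero] at hpre
  rw [← hfij, hm] at hsuf
  exact hmin _ (by omega) (hpre.append hsuf)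

theorem ddist_eq_iff {n : ℕ} {u v : V} (hn : 0 < n) :
    ddist A u v = n ↔ HasWalk A n u v ∧ ∀ m < n, ¬ HasWalk A m u v := by
  constructor
  · rintro rfl
    exact ⟨Nat.sInf_mem (Nat.nonempty_of_pos_sInf hn), fun m hm => Nat.notMem_of_lt_sInf hm⟩
  · rintro ⟨hw, hmin⟩
    exact le_antisymm (Nat.sInf_le hw) <| not_lt.mp fun hlt =>
      hmin _ hlt (Nat.sInf_mem (s := {m | HasWalk A m u v}) ⟨n, hw⟩)

theorem ddist_self (u : V) : ddist A u u = 0 :=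
  Nat.sInf_eq_zero.mpr (Or.inl rfl)

theorem IsCycleThroughEdge.hasWalk {a b : V} {n : ℕ} (h : IsCycleThroughEdge A a b (n + 1)) :
    HasWalk A n b a := by
  obtain ⟨-, c, -, hc, rfl, rfl⟩ := h
  refine hasWalk_iff_exists_fun.mpr ⟨fun t => c ((t + 1 : ℕ) : ZMod (n + 1)), by simp, ?_, ?_⟩
  · simp only [ZMod.natCast_self]
  · intro i _
    simpa only [Nat.cast_succ] using hc ((i + 1 : ℕ) : ZMod (n + 1))

theorem isCycleThroughEdge_of_closed_walk {n : ℕ} (g : ℕ → V)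
    (hg : ∀ i < n + 1, A (g i) (g (i + 1))) (hclosed : g (n + 1) = g 0)
    (hne : ∀ i j, i < j → j ≤ n → g i ≠ g j) :
    IsCycleThroughEdge A (g 0) (g 1) (n + 1) := by
  refine ⟨n.succ_pos, fun i : ZMod (n + 1) => g i.val, ?_, ?_, rfl, ?_⟩
  · intro i j hij
    by_contra hne'
    rcases lt_or_gt_of_ne (fun h => hne' (ZMod.val_injective _ h)) with h | h
    · exact hne _ _ h (Nat.lt_succ_iff.mp (ZMod.val_lt j)) hij
    · exact hne _ _ h (Nat.lt_succ_iff.mp (ZMod.val_lt i)) hij.symm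
  · intro i
    show A (g i.val) (g (i + 1).val)
    rw [ZMod.val_add, ZMod.val_one_eq_one_mod, Nat.add_mod_mod]
    rcases (Nat.lt_succ_iff.mp (ZMod.val_lt i)).lt_or_eq with h | h
    · rw [Nat.mod_eq_of_lt (by omega)]
      exact hg _ (by omega)
    · rw [h, Nat.mod_self, ← hclosed]
      exact hg n n.lt_succ_self
  · show g (ZMod.val 1) = g 1
    rw [ZMod.val_one_eq_one_mod]
    rcases n with _ | n
    · exact hclosed.symm
    · rw [Nat.one_mod_eq_one.mpr (by omega)]

theorem isCycleThroughEdge_of_hasWalk_minimal {a b : V} {n : ℕ} (hab : A a b)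
    (hw : HasWalk A n b a) (hmin : ∀ m < n, ¬ HasWalk A m b a) :
    IsCycleThroughEdge A a b (n + 1) := by
  obtain ⟨f, h0, hm, hf⟩ := hasWalk_iff_exists_fun.mp hw
  have hne := ne_of_hasWalk_minimal hmin f h0 hm hf
  have := isCycleThroughEdge_of_closed_walk (A := A) (n := n)
    (fun | 0 => a | t + 1 => f t) ?_ hm ?_
  · simpa [h0] using this
  · rintro (_ | i) hi
    · simpa [h0] using hab
    · exact hf i (by omega)
  · rintro (_ | i) (_ | j) hij hjn
    · omega
    · exact fun h => hne (i := j) (j := n) (by omega) le_rfl (hm.trans h).symm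
    · omega
    · exact hne (by omega) (by omega)

theorem cycleLen_eq_ddist_add_one {a b : V} (hab : A a b) (hreach : ∃ m, HasWalk A m b a) :
    cycleLen A a b = ddist A b a + 1 := by
  have hC := isCycleThroughEdge_of_hasWalk_minimal hab (Nat.sInf_mem hreach)
    fun m hm => Nat.notMem_of_lt_sInf hm
  refine le_antisymm (Nat.sInf_le hC) (le_csInf ⟨_, hC⟩ fun L hL => ?_)
  obtain ⟨n, rfl⟩ := Nat.exists_eq_add_one_of_ne_zero hL.1.ne'
  exact Nat.succ_le_succ (Nat.sInf_le hL.hasWalk)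

theorem cycleLen_eq_add_one_iff {a b : V} {k : ℕ} (hab : A a b) (hk : 0 < k) :
    cycleLen A a b = k + 1 ↔ ddist A b a = k := by
  constructor
  · intro h
    have hC : IsCycleThroughEdge A a b (k + 1) :=
      h ▸ Nat.sInf_mem (Nat.nonempty_of_sInf_eq_succ h)
    have := cycleLen_eq_ddist_add_one hab ⟨k, hC.hasWalk⟩
    omega
  · intro h
    rw [cycleLen_eq_ddist_add_one hab (Nat.nonempty_of_pos_sInf (h ▸ hk : 0 < ddist A b a)), h]

end Digraph

section LineDigraph

variable {V W : Type*} {A : V → V → Prop} {B : W → W → Prop}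

abbrev Arc (A : V → V → Prop) : Type _ := {p : V × V // A p.1 p.2}

def IsLineDigraph (A : V → V → Prop) (B : W → W → Prop) (e : W ≃ Arc A) : Prop :=
  ∀ w w', B w w' ↔ (e w).1.2 = (e w').1.1

variable {e : W ≃ Arc A}

theorem IsLineDigraph.hasWalk_succ_iff (hL : IsLineDigraph A B e) {m : ℕ} {w w' : W} :
    HasWalk B (m + 1) w w' ↔ HasWalk A m (e w).1.2 (e w').1.1 := by
  induction m generalizing w with
  | zero =>
    exact ⟨fun ⟨x, hwx, hx⟩ => (hx : x = w') ▸ (hL w x).mp hwx,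
      fun h => ⟨w', (hL w w').mpr h, rfl⟩⟩
  | succ m ih =>
    constructor
    · rintro ⟨x, hwx, hx⟩
      exact ⟨(e x).1.2, (hL w x).mp hwx ▸ (e x).2, ih.mp hx⟩
    · rintro ⟨y, hy, hyw⟩
      exact ⟨e.symm ⟨((e w).1.2, y), hy⟩, (hL _ _).mpr (by simp),
        ih.mpr (by simpa using hyw)⟩

theorem IsLineDigraph.ddist_succ_iff (hL : IsLineDigraph A B e) {k : ℕ} (hk : 0 < k)
    {w w' : W} (hne : w ≠ w') :
    ddist B w w' = k + 1 ↔ ddist A (e w).1.2 (e w').1.1 = k := by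
  rw [ddist_eq_iff k.succ_pos, ddist_eq_iff hk, Nat.forall_lt_succ_left]
  simp only [hL.hasWalk_succ_iff]
  exact and_congr_right fun _ => and_iff_right hne

end LineDigraph

section Counting

theorem Nat.card_subtype_and_add_card_subtype_and_not {α : Type*} [Finite α] (p q : α → Prop) :
    Nat.card {x // p x ∧ q x} + Nat.card {x // p x ∧ ¬ q x} = Nat.card {x // p x} := by
  classical
  rw [← Nat.card_sum]
  exact Nat.card_congr (((Equiv.subtypeSubtypeEquivSubtypeInter p q).symm.sumCongr
    (Equiv.subtypeSubtypeEquivSubtypeInter p fun x => ¬ q x).symm).trans (Equiv.sumCompl _))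

theorem Nat.card_subtype_and_fst_eq_snd {α : Type*} (R : α → α → Prop) :
    Nat.card {p : α × α // R p.1 p.2 ∧ p.1 = p.2} = Nat.card {a // R a a} :=
  Nat.card_congr
    { toFun := fun p => ⟨p.1.1, by have h := p.2.1; rwa [← p.2.2] at h⟩
      invFun := fun a => ⟨(a.1, a.1), a.2, rfl⟩
      left_inv := fun p => Subtype.ext (Prod.ext rfl p.2.2)
      right_inv := fun _ => rfl }

variable {V W : Type*} {A : V → V → Prop} {B : W → W → Prop}

theorem card_arc_pairs [Finite V] {d : ℕ} (hin : ∀ v, Nat.card {u // A u v} = d)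
    (hout : ∀ u, Nat.card {v // A u v} = d) (P : V → V → Prop) :
    Nat.card {q : Arc A × Arc A // P q.1.1.2 q.2.1.1} =
      d ^ 2 * Nat.card {p : V × V // P p.1 p.2} := by
  have : Fintype {p : V × V // P p.1 p.2} := Fintype.ofFinite _
  let split : {q : Arc A × Arc A // P q.1.1.2 q.2.1.1} ≃
      Σ p : {p : V × V // P p.1 p.2}, {u // A u p.1.1} × {v // A p.1.2 v} :=
    { toFun := fun q =>
        ⟨⟨(q.1.1.1.2, q.1.2.1.1), q.2⟩, ⟨q.1.1.1.1, q.1.1.2⟩, ⟨q.1.2.1.2, q.1.2.2⟩⟩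
      invFun := fun s =>
        ⟨(⟨(s.2.1.1, s.1.1.1), s.2.1.2⟩, ⟨(s.1.1.2, s.2.2.1), s.2.2.2⟩), s.1.2⟩
      left_inv := fun _ => rfl
      right_inv := fun _ => rfl }
  rw [Nat.card_congr split, Nat.card_sigma]
  simp [Nat.card_prod, hin, hout, Nat.card_eq_fintype_card, Finset.sum_const]
  ring

theorem IsLineDigraph.card_ddist_succ_add_card_cycleLen [Finite V] {e : W ≃ Arc A}
    (hL : IsLineDigraph A B e) {d k : ℕ} (hin : ∀ v, Nat.card {u // A u v} = d)
    (hout : ∀ u, Nat.card {v // A u v} = d) (hk : 0 < k) :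
    Nat.card {p : W × W // p.1 ≠ p.2 ∧ ddist B p.1 p.2 = k + 1} +
        Nat.card {p : V × V // A p.1 p.2 ∧ cycleLen A p.1 p.2 = k + 1} =
      d ^ 2 * Nat.card {p : V × V // p.1 ≠ p.2 ∧ ddist A p.1 p.2 = k} := by
  have : Finite W := Finite.of_equiv _ e.symm
  let R : W → W → Prop := fun w w' => ddist A (e w).1.2 (e w').1.1 = k
  have h_offDiag : Nat.card {p : W × W // p.1 ≠ p.2 ∧ ddist B p.1 p.2 = k + 1} =
      Nat.card {p : W × W // R p.1 p.2 ∧ ¬ p.1 = p.2} :=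
    Nat.card_congr <| Equiv.subtypeEquivRight fun p => by
      rw [and_comm]
      exact and_congr_left fun hne => hL.ddist_succ_iff hk hne
  have h_diag : Nat.card {p : W × W // R p.1 p.2 ∧ p.1 = p.2} =
      Nat.card {p : V × V // A p.1 p.2 ∧ cycleLen A p.1 p.2 = k + 1} := by
    rw [Nat.card_subtype_and_fst_eq_snd]
    exact Nat.card_congr <| (e.subtypeEquiv fun _ => Iff.rfl).trans <|
      (Equiv.subtypeSubtypeEquivSubtypeInter _ fun p : V × V => ddist A p.2 p.1 = k).trans <|
      Equiv.subtypeEquivRight fun p =>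
        and_congr_right fun hp => (cycleLen_eq_add_one_iff hp hk).symm
  have h_all : Nat.card {p : W × W // R p.1 p.2} =
      d ^ 2 * Nat.card {p : V × V // p.1 ≠ p.2 ∧ ddist A p.1 p.2 = k} := by
    calc Nat.card {p : W × W // R p.1 p.2}
        = Nat.card {q : Arc A × Arc A // ddist A q.1.1.2 q.2.1.1 = k} :=
          Nat.card_congr ((e.prodCongr e).subtypeEquiv fun _ => Iff.rfl)
      _ = d ^ 2 * Nat.card {p : V × V // ddist A p.1 p.2 = k} :=
          card_arc_pairs hin hout (ddist A · · = k)
      _ = d ^ 2 * Nat.card {p : V × V // p.1 ≠ p.2 ∧ ddist A p.1 p.2 = k} := by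
          congr 1
          exact Nat.card_congr <| Equiv.subtypeEquivRight fun p =>
            ⟨fun h => ⟨fun hp => by rw [hp, ddist_self] at h; omega, h⟩, And.right⟩
  rw [h_offDiag, ← h_diag, add_comm, Nat.card_subtype_and_add_card_subtype_and_not, h_all]

end Counting

theorem isKautzWord_succ_iff {d n : ℕ} {w : Fin (n + 1) → Fin (d + 1)} :
    IsKautzWord d (n + 1) w ↔ ∀ i : Fin n, w i.castSucc ≠ w i.succ :=
  ⟨fun h i => h i (by omega), fun h i hi => h ⟨i, by omega⟩⟩

theorem card_fin_succ_ne {d : ℕ} (c : Fin (d + 1)) :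
    Nat.card {y : Fin (d + 1) // y ≠ c} = d := by
  simp [Nat.card_eq_fintype_card, Fintype.card_subtype_compl]

namespace KautzVertex

variable {d D : ℕ}

instance : Finite (KautzVertex d D) :=
  inferInstanceAs (Finite {w // IsKautzWord d (D + 1) w})

theorem isKautzWord (u : KautzVertex d D) (i : Fin D) : u.1 i.castSucc ≠ u.1 i.succ :=
  isKautzWord_succ_iff.mp u.2 i

def init (w : KautzVertex d (D + 1)) : KautzVertex d D :=
  ⟨Fin.init w.1, fun i _ => w.2 i (by omega)⟩

def tail (w : KautzVertex d (D + 1)) : KautzVertex d D :=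
  ⟨Fin.tail w.1, fun i _ => w.2 (i + 1) (by omega)⟩

def snoc (u : KautzVertex d D) (y : Fin (d + 1)) (hy : u.1 (Fin.last D) ≠ y) :
    KautzVertex d (D + 1) :=
  ⟨Fin.snoc (α := fun _ => Fin (d + 1)) u.1 y, isKautzWord_succ_iff.mpr fun i => by
    induction i using Fin.lastCases with
    | last => rwa [Fin.succ_last, Fin.snoc_last, Fin.snoc_castSucc]
    | cast j =>
      rw [Fin.succ_castSucc, Fin.snoc_castSucc, Fin.snoc_castSucc]
      exact u.isKautzWord j⟩

def cons (y : Fin (d + 1)) (u : KautzVertex d D) (hy : y ≠ u.1 0) : KautzVertex d (D + 1) :=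
  ⟨Fin.cons (α := fun _ => Fin (d + 1)) y u.1, isKautzWord_succ_iff.mpr fun i => by
    induction i using Fin.cases with
    | zero => exact hy
    | succ j =>
      rw [← Fin.succ_castSucc, Fin.cons_succ, Fin.cons_succ]
      exact u.isKautzWord j⟩

theorem kautzAdj_iff {u v : KautzVertex d (D + 1)} :
    KautzAdj d (D + 1) u v ↔ u.tail = v.init :=
  ⟨fun h => Subtype.ext (funext fun i => (h i).symm),
    fun h i => (congrFun (congrArg Subtype.val h) i).symm⟩

theorem kautzAdj_init_tail (w : KautzVertex d (D + 1)) : KautzAdj d D w.init w.tail :=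
  fun _ => rfl

theorem init_snoc (u : KautzVertex d D) (y : Fin (d + 1)) (hy : u.1 (Fin.last D) ≠ y) :
    (u.snoc y hy).init = u :=
  Subtype.ext (Fin.init_snoc (α := fun _ => Fin (d + 1)) _ _)

theorem tail_cons (y : Fin (d + 1)) (u : KautzVertex d D) (hy : y ≠ u.1 0) :
    (cons y u hy).tail = u :=
  Subtype.ext (Fin.tail_cons (α := fun _ => Fin (d + 1)) y u.1)

def arcEquiv : KautzVertex d (D + 2) ≃ Arc (KautzAdj d (D + 1)) where
  toFun w := ⟨(w.init, w.tail), kautzAdj_init_tail w⟩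
  invFun a := a.1.1.snoc (a.1.2.1 (Fin.last _)) fun h =>
    a.1.2.isKautzWord (Fin.last D) ((a.2 (Fin.last D)).trans h)
  left_inv w := Subtype.ext (Fin.snoc_init_self w.1)
  right_inv := by
    rintro ⟨⟨u, v⟩, huv⟩
    refine Subtype.ext (Prod.ext (init_snoc _ _ _) (Subtype.ext (funext fun i => ?_)))
    show Fin.snoc (α := fun _ => Fin (d + 1)) u.1 _ i.succ = v.1 i
    induction i using Fin.lastCases with
    | last => rw [Fin.succ_last, Fin.snoc_last]
    | cast j => rw [Fin.succ_castSucc, Fin.snoc_castSucc]; exact (huv j).symm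

theorem isLineDigraph_arcEquiv :
    IsLineDigraph (KautzAdj d (D + 1)) (KautzAdj d (D + 2)) arcEquiv :=
  fun _ _ => kautzAdj_iff

def outNeighborEquiv (u : KautzVertex d (D + 1)) :
    {v // KautzAdj d (D + 1) u v} ≃ {y // y ≠ u.1 (Fin.last _)} where
  toFun v := ⟨v.1.1 (Fin.last _), fun h =>
    v.1.isKautzWord (Fin.last D) ((v.2 (Fin.last D)).trans h.symm)⟩
  invFun y := ⟨u.tail.snoc y.1 y.2.symm, kautzAdj_iff.mpr (init_snoc _ _ _).symm⟩
  left_inv := by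
    rintro ⟨v, huv⟩
    refine Subtype.ext (Subtype.ext ?_)
    show Fin.snoc (α := fun _ => Fin (d + 1)) u.tail.1 (v.1 (Fin.last _)) = v.1
    rw [kautzAdj_iff.mp huv]
    exact Fin.snoc_init_self v.1
  right_inv y := Subtype.ext (Fin.snoc_last (α := fun _ => Fin (d + 1)) _ _)

def inNeighborEquiv (v : KautzVertex d (D + 1)) :
    {u // KautzAdj d (D + 1) u v} ≃ {y // y ≠ v.1 0} where
  toFun u := ⟨u.1.1 0, fun h => u.1.isKautzWord 0 (h.trans (u.2 0))⟩
  invFun y := ⟨cons y.1 v.init y.2, kautzAdj_iff.mpr (tail_cons _ _ _)⟩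
  left_inv := by
    rintro ⟨u, huv⟩
    refine Subtype.ext (Subtype.ext ?_)
    show Fin.cons (α := fun _ => Fin (d + 1)) (u.1 0) v.init.1 = u.1
    rw [← kautzAdj_iff.mp huv]
    exact Fin.cons_self_tail u.1
  right_inv _ := rfl

theorem card_kautzAdj_out (u : KautzVertex d (D + 1)) :
    Nat.card {v // KautzAdj d (D + 1) u v} = d :=
  (Nat.card_congr u.outNeighborEquiv).trans (card_fin_succ_ne _)

theorem card_kautzAdj_in (v : KautzVertex d (D + 1)) :
    Nat.card {u // KautzAdj d (D + 1) u v} = d :=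
  (Nat.card_congr v.inNeighborEquiv).trans (card_fin_succ_ne _)

end KautzVertex

theorem sigma_rho_identity_general (d D k : ℕ) (hD : 1 ≤ D) (hk1 : 1 ≤ k) :
    (sigma d (D + 1) (k + 1) : ℤ) =
      (d : ℤ) ^ 2 * (sigma d D k : ℤ) - (rho d D k : ℤ) := by
  obtain ⟨E, rfl⟩ := Nat.exists_eq_add_of_le' hD
  have h :=
    (KautzVertex.isLineDigraph_arcEquiv (d := d) (D := E)).card_ddist_succ_add_card_cycleLen
      KautzVertex.card_kautzAdj_in KautzVertex.card_kautzAdj_out hk1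
  rw [eq_sub_iff_add_eq]
  exact_mod_cast h

/-- For `d ≥ 2`, `D ≥ 1` and `1 ≤ k ≤ D`, the Kautz digraphs
satisfy `σ_{k+1}(d, D+1) = d² · σ_k(d, D) − ρ_k(d, D)`. -/
theorem sigma_rho_identity (d D k : ℕ) (hd : 2 ≤ d) (hD : 1 ≤ D)
    (hk1 : 1 ≤ k) (hkD : k ≤ D) :
    (sigma d (D + 1) (k + 1) : ℤ) =
      (d : ℤ) ^ 2 * (sigma d D k : ℤ) - (rho d D k : ℤ) :=
  sigma_rho_identity_general d D k hD hk1
end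

section
/- Fix d ≥ 2 and D ≥ 2. For every k with 1 ≤ k < ⌊D/2⌋ + 2, one has Δ_k(d, D) = 0; that is, ρ_k(d, D) = ρ_k(d, D−1): the number of edges whose shortest directed cycle has length k+1 is the same in K(d, D) and in K(d, D−1). -/
/-!
An arc `u → v` of `K(d, D)` is the same thing as a Kautz word `w` of length `D + 2`, and the
shortest cycle through it has length equal to the least period `p` of `w`: a cycle of length
`L` through the arc forces `w` to have period `L`, and conversely the rotations of the cyclic
word `w₀ ⋯ w_{p-1}` form a cycle of length `p` (its wrap-around is Kautz and its rotations
are distinct by minimality of `p`). So `ρ_k(d, D)` counts Kautz words of length `D + 2` with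
least period `k + 1`. When `2p ≤ D + 4`, deleting the last letter preserves the least period
(a shorter period of the prefix would, by a Fine–Wilf type argument, either extend to the
whole word or create two equal adjacent letters), and extending periodically inverts this.
-/

section Periods

variable {α : Type*} {f g : ℕ → α} {n m p q : ℕ}

def HasPeriodOn (f : ℕ → α) (n p : ℕ) : Prop :=
  ∀ j, j + p < n → f j = f (j + p)

noncomputable def minPeriodOn (f : ℕ → α) (n : ℕ) : ℕ :=
  sInf {p | 0 < p ∧ HasPeriodOn f n p}

def AdjDistinctOn (f : ℕ → α) (n : ℕ) : Prop :=
  ∀ j, j + 1 < n → f j ≠ f (j + 1)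

lemma hasPeriodOn_self (f : ℕ → α) (n : ℕ) : HasPeriodOn f n n :=
  fun _ h => absurd h (by omega)

lemma HasPeriodOn.mono (h : HasPeriodOn f n p) (hmn : m ≤ n) : HasPeriodOn f m p :=
  fun j hj => h j (by omega)

lemma HasPeriodOn.congr (h : HasPeriodOn f n p) (hfg : ∀ j < n, f j = g j) :
    HasPeriodOn g n p := fun j hj => by
  rw [← hfg j (by omega), ← hfg _ hj]
  exact h j hj

lemma HasPeriodOn.apply_mod (h : HasPeriodOn f n p) (hp : 0 < p) :
    ∀ j < n, f j = f (j % p) := by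
  intro j
  induction j using Nat.strong_induction_on with
  | _ j ih =>
    intro hj
    rcases Nat.lt_or_ge j p with hjp | hjp
    · rw [Nat.mod_eq_of_lt hjp]
    · have hshift := h (j - p) (by omega)
      rw [Nat.sub_add_cancel hjp] at hshift
      rw [← hshift, ih (j - p) (by omega) (by omega), ← Nat.mod_eq_sub_mod hjp]

lemma minPeriodOn_le (hq : 0 < q) (h : HasPeriodOn f n q) : minPeriodOn f n ≤ q :=
  Nat.sInf_le ⟨hq, h⟩

lemma minPeriodOn_mem (f : ℕ → α) (hn : 0 < n) :
    0 < minPeriodOn f n ∧ HasPeriodOn f n (minPeriodOn f n) :=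
  Nat.sInf_mem (s := {p | 0 < p ∧ HasPeriodOn f n p}) ⟨n, hn, hasPeriodOn_self f n⟩

lemma minPeriodOn_pos (f : ℕ → α) (hn : 0 < n) : 0 < minPeriodOn f n :=
  (minPeriodOn_mem f hn).1

lemma hasPeriodOn_minPeriodOn (f : ℕ → α) (hn : 0 < n) : HasPeriodOn f n (minPeriodOn f n) :=
  (minPeriodOn_mem f hn).2

lemma minPeriodOn_le_self (f : ℕ → α) (hn : 0 < n) : minPeriodOn f n ≤ n :=
  minPeriodOn_le hn (hasPeriodOn_self f n)

lemma minPeriodOn_eq (hp : 0 < p) (h : HasPeriodOn f n p)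
    (hmin : ∀ q, 0 < q → q < p → ¬ HasPeriodOn f n q) : minPeriodOn f n = p :=
  le_antisymm (minPeriodOn_le hp h) <| le_csInf ⟨p, hp, h⟩ fun q ⟨hq, hqp⟩ =>
    not_lt.1 fun hlt => hmin q hq hlt hqp

lemma minPeriodOn_congr (hfg : ∀ j < n, f j = g j) : minPeriodOn f n = minPeriodOn g n := by
  have hsymm : ∀ j < n, g j = f j := fun j hj => (hfg j hj).symm
  unfold minPeriodOn
  congr 1
  ext q
  exact and_congr_right fun _ => ⟨fun h => h.congr hfg, fun h => h.congr hsymm⟩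

lemma AdjDistinctOn.mono (hf : AdjDistinctOn f n) (hmn : m ≤ n) : AdjDistinctOn f m :=
  fun j hj => hf j (by omega)

lemma AdjDistinctOn.two_le_minPeriodOn (hf : AdjDistinctOn f n) (hn : 2 ≤ n) :
    2 ≤ minPeriodOn f n := by
  have hpos := minPeriodOn_pos f (by omega : 0 < n)
  have hper := hasPeriodOn_minPeriodOn f (by omega : 0 < n)
  by_contra hlt
  rw [show minPeriodOn f n = 1 by omega] at hper
  exact hf 0 (by omega) (hper 0 (by omega))

/-- The periodic extension by the least period is again Kautz; when that period is the whole
length, the wrap-around needs its minimality. -/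
lemma AdjDistinctOn.apply_mod_minPeriodOn_ne (hf : AdjDistinctOn f n) (hn : 2 ≤ n) (j : ℕ) :
    f (j % minPeriodOn f n) ≠ f ((j + 1) % minPeriodOn f n) := by
  set P := minPeriodOn f n
  have hP := hf.two_le_minPeriodOn hn
  have hper := hasPeriodOn_minPeriodOn f (by omega : 0 < n)
  have hPn : P ≤ n := minPeriodOn_le_self f (by omega)
  have hjP : j % P < P := Nat.mod_lt _ (by omega)
  rw [Nat.add_mod, Nat.mod_eq_of_lt (show 1 < P by omega)]
  rcases Nat.lt_or_ge (j % P + 1) P with hlt | hge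
  · rw [Nat.mod_eq_of_lt hlt]
    exact hf _ (by omega)
  · have hlast : j % P = P - 1 := by omega
    rw [hlast, Nat.sub_add_cancel (by omega), Nat.mod_self]
    rcases Nat.lt_or_ge P n with hPlt | hPge
    · rw [hper 0 (by omega), zero_add]
      have := hf (P - 1) (by omega)
      rwa [Nat.sub_add_cancel (by omega)] at this
    · intro heq
      have hper' : HasPeriodOn f n (P - 1) := fun i hi => by
        obtain rfl : i = 0 := by omega
        simpa using heq.symm
      have := minPeriodOn_le (by omega) hper'
      omega

lemma minPeriodOn_apply_mod_minPeriodOn (hn : 0 < n) (hnm : n ≤ m) :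
    minPeriodOn (fun j => f (j % minPeriodOn f n)) m = minPeriodOn f n := by
  have hP := minPeriodOn_pos f hn
  have hper := hasPeriodOn_minPeriodOn f hn
  refine minPeriodOn_eq hP (fun j _ => by simp) fun q hq hqP hqper => ?_
  have hfq : HasPeriodOn f n q :=
    (hqper.mono hnm).congr fun j hj => (hper.apply_mod hP j hj).symm
  exact absurd (minPeriodOn_le hq hfq) (by omega)

lemma HasPeriodOn.succ_of_add_le (hp : HasPeriodOn f (n + 1) p) (hq : HasPeriodOn f n q)
    (hp0 : 0 < p) (hqp : q + p ≤ n) : HasPeriodOn f (n + 1) q := by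
  intro j hj
  rcases Nat.lt_or_ge (j + q) n with hlt | hge
  · exact hq j hlt
  · have e1 := hp (j - p) (by omega)
    have e2 := hp (j - p + q) (by omega)
    rw [Nat.sub_add_cancel (by omega)] at e1
    rw [show j - p + q + p = j + q by omega] at e2
    rw [← e1, ← e2]
    exact hq _ (by omega)

lemma HasPeriodOn.eq_of_lt_succ (hf : HasPeriodOn f (n + 1) p) (hg : HasPeriodOn g (n + 1) p)
    (hp : 0 < p) (hpn : p ≤ n) (hfg : ∀ j < n, f j = g j) : ∀ j < n + 1, f j = g j := by
  intro j hj
  rcases Nat.lt_or_ge j n with hlt | hge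
  · exact hfg j hlt
  · obtain rfl : j = n := by omega
    have ef := hf (j - p) (by omega)
    have eg := hg (j - p) (by omega)
    rw [Nat.sub_add_cancel hpn] at ef eg
    rw [← ef, ← eg, hfg _ (by omega)]

/-- The one configuration not covered by `HasPeriodOn.succ_of_add_le`: periods `q + 2` and
(on all but the last letter) `q` force period `2`, or else two equal adjacent letters. -/
lemma AdjDistinctOn.hasPeriodOn_two (hf : AdjDistinctOn f (2 * q + 2))
    (hp : HasPeriodOn f (2 * q + 2) (q + 2)) (hq : HasPeriodOn f (2 * q + 1) q) (hq0 : 0 < q) :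
    HasPeriodOn f (2 * q + 2) 2 := by
  have htwo : HasPeriodOn f (q + 1) 2 := fun j hj =>
    calc f j = f (j + 2 + q) := by rw [hp j (by omega), add_assoc, add_comm 2 q]
      _ = f (j + 2) := (hq (j + 2) (by omega)).symm
  have e0 : f 0 = f q := by simpa using hq 0 (by omega)
  have e1 : f 1 = f (q + 1) := by simpa [add_comm] using hq 1 (by omega)
  rcases Nat.even_or_odd q with ⟨r, hr⟩ | hodd
  · have htwo' : HasPeriodOn f (q + 2) 2 := fun j hj => by
      rcases Nat.lt_or_ge j (q - 1) with hlt | hge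
      · exact htwo j (by omega)
      · obtain rfl : j = q - 1 := by omega
        rw [htwo.apply_mod (by omega) _ (by omega), show (q - 1) % 2 = 1 by omega,
          show q - 1 + 2 = q + 1 by omega, e1]
    have hmod2 : ∀ i < 2 * q + 2, f i = f (i % 2) := fun i hi => by
      rw [hp.apply_mod (by omega) i hi, htwo'.apply_mod (by omega) _ (Nat.mod_lt _ (by omega)),
        Nat.mod_mod_of_dvd _ ⟨r + 1, by omega⟩]
    intro j hj
    rw [hmod2 j (by omega), hmod2 (j + 2) hj, Nat.add_mod_right]
  · have hq1 : f q = f 1 := by rw [htwo.apply_mod (by omega) q (by omega), Nat.odd_iff.1 hodd]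
    exact absurd (e0.trans hq1) (hf 0 (by omega))

theorem AdjDistinctOn.minPeriodOn_of_succ (hf : AdjDistinctOn f (n + 1)) (hn : 2 ≤ n)
    (hP : minPeriodOn f (n + 1) = p) (hpn : 2 * p ≤ n + 3) : minPeriodOn f n = p := by
  have hp2 : 2 ≤ p := hP ▸ hf.two_le_minPeriodOn (by omega)
  have hper : HasPeriodOn f (n + 1) p := hP ▸ hasPeriodOn_minPeriodOn f (by omega)
  have hmin : ∀ q, 0 < q → HasPeriodOn f (n + 1) q → p ≤ q := fun q hq h =>
    hP ▸ minPeriodOn_le hq h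
  refine minPeriodOn_eq (by omega) (hper.mono (by omega)) fun q hq hqp hqper => ?_
  by_cases hqn : q + p ≤ n
  · exact absurd (hmin q hq (hper.succ_of_add_le hqper (by omega) hqn)) (by omega)
  obtain rfl | ⟨rfl, rfl⟩ : p = q + 1 ∨ p = q + 2 ∧ n = 2 * q + 1 := by omega
  · have e0 : f 0 = f q := by simpa using hqper 0 (by omega)
    have e1 : f 0 = f (q + 1) := by simpa using hper 0 (by omega)
    exact hf q (by omega) (e0.symm.trans e1)
  · exact absurd (hmin 2 (by omega) (hf.hasPeriodOn_two hper hqper hq)) (by omega)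

end Periods

/-- Counting the fibres of `g` shows that the remaining point cannot break the invariance. -/
lemma apply_perm_eq_of_forall_ne {β γ : Type*} [Fintype β] (σ : Equiv.Perm β)
    {g : β → γ} {y₀ : β} (h : ∀ y ≠ y₀, g (σ y) = g y) (y : β) : g (σ y) = g y := by
  classical
  rcases eq_or_ne y y₀ with rfl | hy
  · by_contra hne
    have hcount :
        ∑ x, (if g (σ x) = g y then 1 else 0 : ℕ) = ∑ x, (if g x = g y then 1 else 0) :=
      Equiv.sum_comp σ fun x => if g x = g y then 1 else 0
    rw [← Finset.add_sum_erase _ _ (Finset.mem_univ y),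
      ← Finset.add_sum_erase _ _ (Finset.mem_univ y),
      Finset.sum_congr rfl fun x hx => by rw [h x (Finset.ne_of_mem_erase hx)]] at hcount
    simp [hne] at hcount
  · exact h y hy

/-- In a primitive cyclic word of length `P`, any `P - 1` consecutive letters determine
their position. -/
lemma ZMod.eq_of_forall_le_apply_add_eq {β : Type*} {P D : ℕ} [NeZero P] {G : ZMod P → β}
    (hPD : P ≤ D + 2) (hG : ∀ r, (∀ y, G (y + r) = G y) → r = 0) {i i' : ZMod P}
    (h : ∀ j ≤ D, G (i + j) = G (i' + j)) : i = i' := by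
  have hshift : ∀ y, G (y + (i' - i)) = G y := by
    refine apply_perm_eq_of_forall_ne (Equiv.addRight (i' - i)) (y₀ := i - 1) fun y hy => ?_
    have hj : (y - i).val ≤ D := by
      by_contra hj
      have hval : (y - i).val + 1 = P := by have := ZMod.val_lt (y - i); omega
      have hcast := congrArg (Nat.cast : ℕ → ZMod P) hval
      push_cast at hcast
      rw [ZMod.natCast_zmod_val, ZMod.natCast_self] at hcast
      exact hy (by linear_combination hcast)
    have hwin := h _ hj
    rw [ZMod.natCast_zmod_val, add_sub_cancel] at hwin
    rw [Equiv.coe_addRight, hwin]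
    congr 1
    ring
  exact (sub_eq_zero.1 (hG _ hshift)).symm

namespace KautzVertex

variable {d D : ℕ}

/-- The word `u₀ u₁ ⋯ u_D v_D` spelled by the arc `u → v`, continued by the constant `v_D`. -/
def edgeWord (u v : KautzVertex d D) : ℕ → Fin (d + 1) :=
  fun j => if h : j < D + 1 then u.1 ⟨j, h⟩ else v.1 (Fin.last D)

lemma edgeWord_of_lt (u v : KautzVertex d D) {j : ℕ} (h : j < D + 1) :
    edgeWord u v j = u.1 ⟨j, h⟩ := dif_pos h

lemma edgeWord_succ {u v : KautzVertex d D} (huv : KautzAdj d D u v) {j : ℕ} (h : j < D + 1) :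
    edgeWord u v (j + 1) = v.1 ⟨j, h⟩ := by
  by_cases hj : j + 1 < D + 1
  · rw [edgeWord_of_lt u v hj]
    exact (huv ⟨j, by omega⟩).symm
  · obtain rfl : j = D := by omega
    exact dif_neg hj

lemma adjDistinctOn_edgeWord (hD : 1 ≤ D) {u v : KautzVertex d D} (huv : KautzAdj d D u v) :
    AdjDistinctOn (edgeWord u v) (D + 2) := by
  rintro (_ | j) hj
  · rw [edgeWord_of_lt u v (by omega), edgeWord_of_lt u v (by omega)]
    exact u.2 0 (by omega)
  · rw [edgeWord_succ huv (by omega), edgeWord_succ huv (by omega)]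
    exact v.2 j (by omega)

lemma eq_of_edgeWord_eq {u v u' v' : KautzVertex d D} (huv : KautzAdj d D u v)
    (huv' : KautzAdj d D u' v') (h : ∀ j < D + 2, edgeWord u v j = edgeWord u' v' j) :
    (u, v) = (u', v') := by
  refine Prod.ext (Subtype.ext (funext fun j => ?_)) (Subtype.ext (funext fun j => ?_))
  · rw [← edgeWord_of_lt u v j.2, h _ (by omega), edgeWord_of_lt]
  · rw [← edgeWord_succ huv j.2, h _ (by omega), edgeWord_succ huv']

def ofWord (f : ℕ → Fin (d + 1)) (hf : AdjDistinctOn f (D + 1)) : KautzVertex d D :=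
  ⟨fun j => f j, fun i h => hf i h⟩

def edgeOfWord (f : ℕ → Fin (d + 1)) (hf : AdjDistinctOn f (D + 2)) :
    KautzVertex d D × KautzVertex d D :=
  (ofWord f (hf.mono (by omega)), ofWord (fun j => f (j + 1)) fun j hj => hf (j + 1) (by omega))

lemma adj_edgeOfWord (f : ℕ → Fin (d + 1)) (hf : AdjDistinctOn f (D + 2)) :
    KautzAdj d D (edgeOfWord f hf).1 (edgeOfWord f hf).2 := fun _ => rfl

lemma edgeWord_edgeOfWord (f : ℕ → Fin (d + 1)) (hf : AdjDistinctOn f (D + 2)) {j : ℕ}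
    (hj : j < D + 2) : edgeWord (edgeOfWord f hf).1 (edgeOfWord f hf).2 j = f j := by
  by_cases h : j < D + 1
  · exact edgeWord_of_lt _ _ h
  · obtain rfl : j = D + 1 := by omega
    exact dif_neg h

lemma apply_eq_apply_add_zero {L : ℕ} {c : ZMod L → KautzVertex d D}
    (hc : ∀ i, KautzAdj d D (c i) (c (i + 1))) (i : ZMod L) :
    ∀ (j : ℕ) (hj : j < D + 1), (c i).1 ⟨j, hj⟩ = (c (i + j)).1 0 := by
  intro j
  induction j generalizing i with
  | zero => intro _; simp
  | succ j ih =>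
    intro hj
    calc (c i).1 ⟨j + 1, hj⟩ = (c (i + 1)).1 ⟨j, by omega⟩ := (hc i ⟨j, by omega⟩).symm
      _ = (c (i + (j + 1 : ℕ))).1 0 := by rw [ih, Nat.cast_succ, add_assoc, add_comm 1]

lemma hasPeriodOn_edgeWord_of_isCycleThroughEdge {u v : KautzVertex d D} {L : ℕ}
    (h : IsCycleThroughEdge (KautzAdj d D) u v L) : HasPeriodOn (edgeWord u v) (D + 2) L := by
  obtain ⟨-, c, -, hc, rfl, rfl⟩ := h
  have h01 : KautzAdj d D (c 0) (c 1) := by simpa using hc 0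
  have hletter : ∀ j < D + 2, edgeWord (c 0) (c 1) j = (c j).1 0 := by
    rintro (_ | j) hj
    · rw [edgeWord_of_lt _ _ (by omega), apply_eq_apply_add_zero hc, Nat.cast_zero, zero_add]
    · rw [edgeWord_succ h01 (by omega), apply_eq_apply_add_zero hc, Nat.cast_succ,
        add_comm (1 : ZMod L)]
  intro j hj
  rw [hletter j (by omega), hletter _ hj, Nat.cast_add, ZMod.natCast_self, add_zero]

def ofCyclicWord {P : ℕ} (G : ZMod P → Fin (d + 1)) (hG : ∀ x, G x ≠ G (x + 1)) (i : ZMod P) :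
    KautzVertex d D :=
  ⟨fun j => G (i + (j : ℕ)), fun j _ => by simpa only [Nat.cast_succ, ← add_assoc] using hG _⟩

lemma adj_ofCyclicWord {P : ℕ} (G : ZMod P → Fin (d + 1)) (hG : ∀ x, G x ≠ G (x + 1))
    (i : ZMod P) : KautzAdj d D (ofCyclicWord G hG i) (ofCyclicWord G hG (i + 1)) := fun j => by
  show G (i + 1 + (j.castSucc : ℕ)) = G (i + (j.succ : ℕ))
  rw [Fin.val_castSucc, Fin.val_succ, Nat.cast_succ, add_assoc, add_comm (1 : ZMod P)]

lemma ofCyclicWord_injective {P : ℕ} [NeZero P] (hPD : P ≤ D + 2) {G : ZMod P → Fin (d + 1)}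
    (hG : ∀ x, G x ≠ G (x + 1)) (hprim : ∀ r, (∀ y, G (y + r) = G y) → r = 0) :
    Function.Injective (ofCyclicWord (D := D) G hG) := fun _ _ h =>
  ZMod.eq_of_forall_le_apply_add_eq hPD hprim fun j hj =>
    congrFun (congrArg Subtype.val h) ⟨j, by omega⟩

/-- The arc `u → v` lies on the cycle of the rotations of its word's least-period prefix. -/
lemma isCycleThroughEdge_minPeriodOn (hD : 1 ≤ D) {u v : KautzVertex d D}
    (huv : KautzAdj d D u v) :
    IsCycleThroughEdge (KautzAdj d D) u v (minPeriodOn (edgeWord u v) (D + 2)) := by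
  obtain ⟨P, hP⟩ : ∃ P, minPeriodOn (edgeWord u v) (D + 2) = P := ⟨_, rfl⟩
  rw [hP]
  have hf := adjDistinctOn_edgeWord hD huv
  have hP2 : 2 ≤ P := hP ▸ hf.two_le_minPeriodOn (by omega)
  have hPD : P ≤ D + 2 := hP ▸ minPeriodOn_le_self _ (by omega)
  have hper : HasPeriodOn (edgeWord u v) (D + 2) P := hP ▸ hasPeriodOn_minPeriodOn _ (by omega)
  have : NeZero P := ⟨by omega⟩
  have : Fact (1 < P) := ⟨by omega⟩
  have hcast : ∀ j < D + 2, edgeWord u v (j : ZMod P).val = edgeWord u v j := fun j hj => by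
    rw [ZMod.val_natCast, ← hper.apply_mod (by omega) j hj]
  have hcyc : ∀ x : ZMod P, edgeWord u v x.val ≠ edgeWord u v (x + 1).val := fun x => by
    have hsucc : (x + 1).val = (x.val + 1) % P := by rw [ZMod.val_add, ZMod.val_one]
    have := hf.apply_mod_minPeriodOn_ne (by omega) x.val
    rwa [hP, Nat.mod_eq_of_lt x.val_lt, ← hsucc] at this
  have hprim : ∀ r : ZMod P, (∀ y, edgeWord u v (y + r).val = edgeWord u v y.val) → r = 0 := by
    intro r hr
    by_contra hr0
    have hrper : HasPeriodOn (edgeWord u v) (D + 2) r.val := fun j hj => by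
      rw [← hcast j (by omega), ← hcast _ hj, Nat.cast_add, ZMod.natCast_zmod_val, hr]
    have := hP ▸ minPeriodOn_le (ZMod.val_pos.2 hr0) hrper
    exact absurd (ZMod.val_lt r) (by omega)
  refine ⟨by omega, ofCyclicWord _ hcyc, ofCyclicWord_injective hPD hcyc hprim,
    adj_ofCyclicWord _ hcyc, Subtype.ext (funext fun j => ?_), Subtype.ext (funext fun j => ?_)⟩
  · show edgeWord u v ((0 : ZMod P) + (j : ℕ)).val = u.1 j
    rw [zero_add]
    exact (hcast j (by omega)).trans (edgeWord_of_lt u v j.2)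
  · show edgeWord u v ((1 : ZMod P) + (j : ℕ)).val = v.1 j
    rw [add_comm (1 : ZMod P), ← Nat.cast_succ]
    exact (hcast _ (by omega)).trans (edgeWord_succ huv j.2)

theorem cycleLen_eq_minPeriodOn (hD : 1 ≤ D) {u v : KautzVertex d D} (huv : KautzAdj d D u v) :
    cycleLen (KautzAdj d D) u v = minPeriodOn (edgeWord u v) (D + 2) :=
  have hcyc := isCycleThroughEdge_minPeriodOn hD huv
  le_antisymm (Nat.sInf_le hcyc) <| le_csInf ⟨_, hcyc⟩ fun _ hL =>
    minPeriodOn_le hL.1 (hasPeriodOn_edgeWord_of_isCycleThroughEdge hL)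

lemma minPeriodOn_edgeWord_edgeOfWord (f : ℕ → Fin (d + 1)) (hf : AdjDistinctOn f (D + 2)) :
    minPeriodOn (edgeWord (edgeOfWord f hf).1 (edgeOfWord f hf).2) (D + 2) =
      minPeriodOn f (D + 2) :=
  minPeriodOn_congr fun _ hj => edgeWord_edgeOfWord f hf hj

abbrev ArcOfMinPeriod (d D p : ℕ) : Type :=
  {x : KautzVertex d D × KautzVertex d D //
    KautzAdj d D x.1 x.2 ∧ minPeriodOn (x.1.edgeWord x.2) (D + 2) = p}

lemma rho_eq_card_arcOfMinPeriod (hD : 1 ≤ D) (k : ℕ) :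
    rho d D k = Nat.card (ArcOfMinPeriod d D (k + 1)) :=
  Nat.card_congr <| Equiv.subtypeEquivRight fun _ =>
    and_congr_right fun huv => by rw [cycleLen_eq_minPeriodOn hD huv]

/-- Deleting the last letter of the word of an arc is a bijection; its inverse extends a word
periodically. -/
theorem card_arcOfMinPeriod_succ {E p : ℕ} (hE : 1 ≤ E) (hp : 2 * p ≤ E + 5) :
    Nat.card (ArcOfMinPeriod d (E + 1) p) = Nat.card (ArcOfMinPeriod d E p) := by
  let trunc : ArcOfMinPeriod d (E + 1) p → ArcOfMinPeriod d E p := fun x =>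
    have hf := adjDistinctOn_edgeWord (by omega) x.2.1
    ⟨edgeOfWord _ (hf.mono (by omega)), adj_edgeOfWord _ _, by
      rw [minPeriodOn_edgeWord_edgeOfWord]
      exact hf.minPeriodOn_of_succ (by omega) x.2.2 (by omega)⟩
  have htrunc : ∀ x, ∀ j < E + 2,
      (trunc x).1.1.edgeWord (trunc x).1.2 j = x.1.1.edgeWord x.1.2 j := fun x _ hj =>
    edgeWord_edgeOfWord _ ((adjDistinctOn_edgeWord (by omega) x.2.1).mono (by omega)) hj
  refine Nat.card_congr (Equiv.ofBijective trunc ⟨fun x y hxy => ?_, fun y => ?_⟩)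
  · have hlow : ∀ j < E + 2, x.1.1.edgeWord x.1.2 j = y.1.1.edgeWord y.1.2 j := fun j hj => by
      rw [← htrunc x j hj, ← htrunc y j hj, hxy]
    have hper (z : ArcOfMinPeriod d (E + 1) p) :
        HasPeriodOn (z.1.1.edgeWord z.1.2) (E + 2 + 1) p := by
      have := hasPeriodOn_minPeriodOn (z.1.1.edgeWord z.1.2) (n := E + 1 + 2) (by omega)
      rwa [z.2.2] at this
    have hp : 0 < p := x.2.2 ▸ minPeriodOn_pos _ (by omega)
    exact Subtype.ext <| eq_of_edgeWord_eq x.2.1 y.2.1 <|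
      (hper x).eq_of_lt_succ (hper y) hp (by omega) hlow
  · obtain ⟨⟨u, v⟩, huv, hmin⟩ := y
    have hf := adjDistinctOn_edgeWord hE huv
    have hext : AdjDistinctOn (fun j => u.edgeWord v (j % minPeriodOn (u.edgeWord v) (E + 2)))
        (E + 1 + 2) := fun j _ => hf.apply_mod_minPeriodOn_ne (by omega) j
    refine ⟨⟨edgeOfWord _ hext, adj_edgeOfWord _ _, ?_⟩,
      Subtype.ext <| eq_of_edgeWord_eq (trunc _).2.1 huv fun j hj => ?_⟩
    · rw [minPeriodOn_edgeWord_edgeOfWord, minPeriodOn_apply_mod_minPeriodOn (by omega) (by omega),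
        hmin]
    · exact (htrunc _ j hj).trans <| (edgeWord_edgeOfWord _ hext (by omega)).trans
        ((hasPeriodOn_minPeriodOn _ (by omega)).apply_mod (minPeriodOn_pos _ (by omega)) j hj).symm

end KautzVertex

theorem delta_vanishes_general (d D k : ℕ) (hD : 2 ≤ D) (hk : k < D / 2 + 2) :
    rho d D k = rho d (D - 1) k := by
  obtain ⟨E, rfl⟩ : ∃ E, D = E + 1 := ⟨D - 1, by omega⟩
  rw [Nat.add_sub_cancel, KautzVertex.rho_eq_card_arcOfMinPeriod (by omega),
    KautzVertex.rho_eq_card_arcOfMinPeriod (by omega)]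
  exact KautzVertex.card_arcOfMinPeriod_succ (by omega) (by omega)

/-- For `d ≥ 2`, `D ≥ 2` and every `k` with `1 ≤ k < ⌊D/2⌋ + 2`,
`Δ_k(d, D) = 0`; that is, `ρ_k(d, D) = ρ_k(d, D−1)`. -/
theorem delta_vanishes (d D k : ℕ) (hd : 2 ≤ d) (hD : 2 ≤ D)
    (hk1 : 1 ≤ k) (hk : k < D / 2 + 2) :
    rho d D k = rho d (D - 1) k :=
  delta_vanishes_general d D k hD hk
end

section
/- Fix d ≥ 2 and D ≥ 2. For every k with ⌊D/2⌋ + 2 ≤ k ≤ D − 1, one has Δ_k(d, D) ≥ 0; that is, ρ_k(d, D) ≥ ρ_k(d, D−1): the number of edges whose shortest directed cycle has length k+1 does not decrease in passing from K(d, D−1) to K(d, D). -/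
/-!
An edge `u → v` of `K(d, E)` lying on a directed cycle of length `L` is the pair of length-`(E+1)`
windows at positions `0` and `1` of an `L`-periodic infinite Kautz sequence; conversely a Kautz
sequence of least period `p ≤ E + 1` yields such a cycle of length `p`, since windows of length
`≥ p` tell its shifts apart. Take a sequence realising the shortest cycle through an edge of
`K(d, E)` of length `k + 1 ≤ E + 1`; its windows of length `E + 2` form an edge of `K(d, E + 1)`
whose shortest cycle again has length `k + 1`, because any shorter one would truncate to a shorter
cycle in `K(d, E)`. Truncation recovers the original edge, so this lift is injective.
-/

open Function

section Cycles

variable {V : Type*} {Adj : V → V → Prop} {u v : V} {L : ℕ}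

theorem cycleLen_le_of_isCycleThroughEdge (h : IsCycleThroughEdge Adj u v L) :
    cycleLen Adj u v ≤ L :=
  Nat.sInf_le h

theorem isCycleThroughEdge_cycleLen (h : cycleLen Adj u v ≠ 0) :
    IsCycleThroughEdge Adj u v (cycleLen Adj u v) :=
  Nat.sInf_mem (Nat.nonempty_of_pos_sInf (Nat.pos_of_ne_zero h))

theorem cycleLen_ne_zero_of_isCycleThroughEdge (h : IsCycleThroughEdge Adj u v L) :
    cycleLen Adj u v ≠ 0 := by
  have hmem : cycleLen Adj u v ∈ {L | IsCycleThroughEdge Adj u v L} := Nat.sInf_mem ⟨L, h⟩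
  exact hmem.1.ne'

end Cycles

instance (d D : ℕ) : Finite (KautzVertex d D) :=
  inferInstanceAs (Finite {w : Fin (D + 1) → Fin (d + 1) // IsKautzWord d (D + 1) w})

def KautzVertex.trunc {d E : ℕ} (u : KautzVertex d (E + 1)) : KautzVertex d E :=
  ⟨fun j => u.1 j.castSucc, fun i h => u.2 i (by omega)⟩

def KautzSeq (d : ℕ) : Type :=
  { s : ℕ → Fin (d + 1) // ∀ n, s n ≠ s (n + 1) }

namespace KautzSeq

variable {d E : ℕ}

def shift (s : KautzSeq d) : KautzSeq d :=
  ⟨fun n => s.1 (n + 1), fun n => s.2 (n + 1)⟩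

theorem shift_iterate_apply (s : KautzSeq d) (i n : ℕ) : (shift^[i] s).1 n = s.1 (n + i) := by
  induction i generalizing s with
  | zero => rfl
  | succ i ih => rw [iterate_succ_apply, ih]; rfl

theorem periodic_of_isPeriodicPt {s : KautzSeq d} {p : ℕ} (h : IsPeriodicPt shift p s) :
    Periodic s.1 p := fun n => by
  rw [← shift_iterate_apply, h.eq]

def window (E : ℕ) (s : KautzSeq d) : KautzVertex d E :=
  ⟨fun j => s.1 j, fun i _ => s.2 i⟩

theorem kautzAdj_window_shift (s : KautzSeq d) :
    KautzAdj d E (window E s) (window E s.shift) :=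
  fun _ => rfl

theorem trunc_window (s : KautzSeq d) : (window (E + 1) s).trunc = window E s :=
  rfl

theorem eq_of_window_eq {s t : KautzSeq d} {p : ℕ} (hp : 0 < p) (hpE : p ≤ E + 1)
    (hs : IsPeriodicPt shift p s) (ht : IsPeriodicPt shift p t)
    (h : window E s = window E t) : s = t := by
  refine Subtype.ext (funext fun n => ?_)
  rw [← (periodic_of_isPeriodicPt hs).map_mod_nat, ← (periodic_of_isPeriodicPt ht).map_mod_nat]
  exact congrFun (congrArg Subtype.val h) ⟨n % p, by have := Nat.mod_lt n hp; omega⟩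

theorem isCycleThroughEdge_window (s : KautzSeq d) (hp : 0 < minimalPeriod shift s)
    (hpE : minimalPeriod shift s ≤ E + 1) :
    IsCycleThroughEdge (KautzAdj d E) (window E s) (window E s.shift) (minimalPeriod shift s) := by
  set p := minimalPeriod shift s
  have : NeZero p := ⟨hp.ne'⟩
  have hval : ∀ n : ℕ, shift^[(n : ZMod p).val] s = shift^[n] s := fun n => by
    rw [ZMod.val_natCast, iterate_mod_minimalPeriod_eq]
  refine ⟨hp, fun i => window E (shift^[i.val] s), fun i j hij => ?_, fun i => ?_, ?_, ?_⟩
  · have hper := isPeriodicPt_minimalPeriod shift s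
    have := eq_of_window_eq hp hpE (hper.apply_iterate _) (hper.apply_iterate _) hij
    rw [iterate_eq_iterate_iff_of_lt_minimalPeriod (ZMod.val_lt i) (ZMod.val_lt j)] at this
    exact ZMod.val_injective p this
  · show KautzAdj d E (window E (shift^[i.val] s)) (window E (shift^[(i + 1).val] s))
    rw [← ZMod.natCast_zmod_val i, ← Nat.cast_succ, hval, hval, iterate_succ_apply']
    exact kautzAdj_window_shift _
  · show window E (shift^[(0 : ZMod p).val] s) = _
    rw [ZMod.val_zero]; rfl
  · simpa using congrArg (window E) (hval 1)

theorem cycleLen_window_le (s : KautzSeq d) (hp : 0 < minimalPeriod shift s)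
    (hpE : minimalPeriod shift s ≤ E + 1) :
    cycleLen (KautzAdj d E) (window E s) (window E s.shift) ≤ minimalPeriod shift s :=
  cycleLen_le_of_isCycleThroughEdge (isCycleThroughEdge_window s hp hpE)

theorem exists_window_eq_of_isCycleThroughEdge {u v : KautzVertex d E} {L : ℕ} (hE : 1 ≤ E)
    (h : IsCycleThroughEdge (KautzAdj d E) u v L) :
    ∃ s : KautzSeq d, IsPeriodicPt shift L s ∧ window E s = u ∧ window E s.shift = v := by
  obtain ⟨hL, c, -, hadj, hc0, hc1⟩ := h
  have : NeZero L := ⟨hL.ne'⟩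
  have hcj : ∀ (j : ℕ) (hj : j < E + 1) (i : ZMod L), (c i).1 ⟨j, hj⟩ = (c (i + j)).1 0 := by
    intro j
    induction j with
    | zero => intro _ i; simp
    | succ j ih =>
      intro hj i
      have hstep := hadj i ⟨j, by omega⟩
      simp only [Fin.castSucc_mk, Fin.succ_mk] at hstep
      calc (c i).1 ⟨j + 1, hj⟩ = (c (i + 1)).1 ⟨j, by omega⟩ := hstep.symm
        _ = (c (i + 1 + j)).1 0 := ih _ _
        _ = (c (i + (j + 1 : ℕ))).1 0 := by
          rw [show i + 1 + (j : ZMod L) = i + ((j + 1 : ℕ) : ZMod L) by push_cast; ring]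
  refine ⟨⟨fun n => (c n).1 0, fun n => ?_⟩, ?_, ?_, ?_⟩
  · have hnext := hcj 1 (by omega) n
    rw [Nat.cast_one] at hnext
    show (c n).1 0 ≠ (c ((n + 1 : ℕ) : ZMod L)).1 0
    rw [Nat.cast_succ, ← hnext]
    exact (c n).2 0 (by omega)
  · refine Subtype.ext (funext fun n => (shift_iterate_apply _ L n).trans ?_)
    show (c ((n + L : ℕ) : ZMod L)).1 0 = _
    rw [Nat.cast_add, ZMod.natCast_self, add_zero]
  · refine Subtype.ext (funext fun j => ?_)
    simp only [window, ← hc0, hcj j.1 j.2 0, zero_add]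
  · refine Subtype.ext (funext fun j => ?_)
    simp only [window, shift, ← hc1, hcj j.1 j.2 1, Nat.cast_add, Nat.cast_one, add_comm]

theorem exists_window_eq_minimalPeriod_eq_cycleLen {u v : KautzVertex d E} (hE : 1 ≤ E)
    (h0 : cycleLen (KautzAdj d E) u v ≠ 0) (hle : cycleLen (KautzAdj d E) u v ≤ E + 1) :
    ∃ s : KautzSeq d, window E s = u ∧ window E s.shift = v ∧
      minimalPeriod shift s = cycleLen (KautzAdj d E) u v := by
  have hc := isCycleThroughEdge_cycleLen h0
  obtain ⟨s, hper, rfl, rfl⟩ := exists_window_eq_of_isCycleThroughEdge hE hc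
  have hmin := hper.minimalPeriod_le hc.1
  exact ⟨s, rfl, rfl, le_antisymm hmin
    (cycleLen_window_le s (hper.minimalPeriod_pos hc.1) (by omega))⟩

theorem exists_lift_cycleLen_eq {u v : KautzVertex d E} {k : ℕ} (hE : 1 ≤ E) (hk : k ≤ E)
    (hcl : cycleLen (KautzAdj d E) u v = k + 1) :
    ∃ u' v' : KautzVertex d (E + 1), KautzAdj d (E + 1) u' v' ∧
      cycleLen (KautzAdj d (E + 1)) u' v' = k + 1 ∧ u'.trunc = u ∧ v'.trunc = v := by
  obtain ⟨s, rfl, rfl, hs⟩ :=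
    exists_window_eq_minimalPeriod_eq_cycleLen (u := u) (v := v) hE (by omega) (by omega)
  refine ⟨window (E + 1) s, window (E + 1) s.shift, kautzAdj_window_shift s, ?_,
    trunc_window s, trunc_window s.shift⟩
  have hcyc := isCycleThroughEdge_window (E := E + 1) s (by omega) (by omega)
  have hle := cycleLen_le_of_isCycleThroughEdge hcyc
  have h0 := cycleLen_ne_zero_of_isCycleThroughEdge hcyc
  obtain ⟨t, ht, ht', htp⟩ := exists_window_eq_minimalPeriod_eq_cycleLen (by omega) h0 (by omega)
  -- a shorter cycle upstairs would truncate to one downstairs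
  have hshorter := cycleLen_window_le (E := E) t (by omega) (by omega)
  rw [← trunc_window, ht, ← trunc_window t.shift, ht', trunc_window, trunc_window] at hshorter
  omega

end KautzSeq

theorem rho_le_rho_succ {d E k : ℕ} (hE : 1 ≤ E) (hk : k ≤ E) : rho d E k ≤ rho d (E + 1) k := by
  have lift : ∀ x : {p : KautzVertex d E × KautzVertex d E //
      KautzAdj d E p.1 p.2 ∧ cycleLen (KautzAdj d E) p.1 p.2 = k + 1},
      ∃ y : {p : KautzVertex d (E + 1) × KautzVertex d (E + 1) //
      KautzAdj d (E + 1) p.1 p.2 ∧ cycleLen (KautzAdj d (E + 1)) p.1 p.2 = k + 1},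
      y.1.1.trunc = x.1.1 ∧ y.1.2.trunc = x.1.2 := fun x => by
    obtain ⟨u', v', hadj, hcl, hu, hv⟩ := KautzSeq.exists_lift_cycleLen_eq hE hk x.2.2
    exact ⟨⟨(u', v'), hadj, hcl⟩, hu, hv⟩
  choose f hf using lift
  refine Nat.card_le_card_of_injective f fun x y hxy => Subtype.ext (Prod.ext ?_ ?_)
  · rw [← (hf x).1, ← (hf y).1, hxy]
  · rw [← (hf x).2, ← (hf y).2, hxy]

theorem delta_nonneg_general (d D k : ℕ)
    (hk1 : D / 2 + 2 ≤ k) (hk2 : k ≤ D - 1) :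
    rho d (D - 1) k ≤ rho d D k := by
  have h := rho_le_rho_succ (d := d) (E := D - 1) (by omega) hk2
  rwa [Nat.sub_add_cancel (by omega)] at h

/-- For `d ≥ 2`, `D ≥ 2` and every `k` with
`⌊D/2⌋ + 2 ≤ k ≤ D − 1`, `Δ_k(d, D) ≥ 0`; that is, `ρ_k(d, D) ≥ ρ_k(d, D−1)`. -/
theorem delta_nonneg (d D k : ℕ) (hd : 2 ≤ d) (hD : 2 ≤ D)
    (hk1 : D / 2 + 2 ≤ k) (hk2 : k ≤ D - 1) :
    rho d (D - 1) k ≤ rho d D k :=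
  delta_nonneg_general d D k hk1 hk2
end

section
/- Let d ≥ 2, D ≥ 1, and let e = (u → v) be a directed edge of the Kautz digraph K(d, D). Let r be the largest t ∈ {0, …, D+1} such that the suffix of v of length t equals the prefix of u of length t. Then the shortest directed cycle of K(d, D) containing the edge e has length exactly D + 2 − r. -/
/-- The suffix of `v` of length `t` equals the prefix of `u` of length `t`
(for words of length `D+1`). -/
def Overlap (d D : ℕ) (u v : KautzVertex d D) (t : ℕ) : Prop :=
  ∃ _ : t ≤ D + 1, ∀ i (hi : i < t),
    v.1 ⟨D + 1 - t + i, by omega⟩ = u.1 ⟨i, by omega⟩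

/-!
Closing a shortest walk from `v` back to `u` with the edge `u → v` gives a cycle, since a
shortest walk repeats no vertex; hence the shortest cycle through `u → v` is one longer than
the distance from `v` to `u`. In `K(d, D)` a walk of length `m ≤ D + 1` from `v` to `u` shifts
words by `m` letters, so it forces an overlap of length `D + 1 - m` between the suffix of `v`
and the prefix of `u`. Conversely, appending the letters of `u` after `v` one at a time, from
position `r` on, is a walk of length `D + 1 - r`: the first appended letter `u_r` differs from
the last letter of `v`, which is `u_(r-1)` when `r > 0`, and by maximality of `r` when `r = 0`.
-/

section Digraph

variable {V : Type*} {Adj : V → V → Prop}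

theorem HasWalk.append_s5 {a b : ℕ} {x y z : V} (hxy : HasWalk Adj a x y)
    (hyz : HasWalk Adj b y z) : HasWalk Adj (a + b) x z := by
  induction a generalizing x with
  | zero =>
    obtain rfl : x = y := hxy
    simpa using hyz
  | succ a ih =>
    obtain ⟨w, hxw, hwy⟩ := hxy
    rw [Nat.add_right_comm]
    exact ⟨w, hxw, ih hwy⟩

theorem hasWalk_of_adj_seq {m : ℕ} (W : ℕ → V) (hW : ∀ i < m, Adj (W i) (W (i + 1))) :
    ∀ {a n : ℕ}, a + n ≤ m → HasWalk Adj n (W a) (W (a + n)) := by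
  intro a n
  induction n generalizing a with
  | zero => intro _; rfl
  | succ n ih =>
    intro h
    refine ⟨W (a + 1), hW a (by omega), ?_⟩
    rw [← Nat.add_assoc, Nat.add_right_comm]
    exact ih (by omega)

theorem exists_adj_seq_of_hasWalk {m : ℕ} {x y : V} (h : HasWalk Adj m x y) :
    ∃ W : ℕ → V, W 0 = x ∧ W m = y ∧ ∀ i < m, Adj (W i) (W (i + 1)) := by
  induction m generalizing x with
  | zero => exact ⟨fun _ => x, rfl, h, by simp⟩
  | succ m ih =>
    obtain ⟨w, hxw, hwy⟩ := h
    obtain ⟨W, hW0, hWm, hW⟩ := ih hwy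
    refine ⟨fun i => if i = 0 then x else W (i - 1), by simp, by simpa using hWm, ?_⟩
    rintro (_ | i) hi
    · simpa [hW0] using hxw
    · simpa using hW i (by omega)

theorem IsCycleThroughEdge.hasWalk_s5 {u v : V} {L : ℕ} (h : IsCycleThroughEdge Adj u v L) :
    HasWalk Adj (L - 1) v u := by
  obtain ⟨hL, c, -, hc, rfl, rfl⟩ := h
  have hwalk := hasWalk_of_adj_seq (m := L - 1) (fun i : ℕ => c (1 + i))
    (fun i _ => by simpa [add_assoc] using hc (1 + i)) (a := 0) (n := L - 1) (by omega)
  have hL' : (1 : ZMod L) + ((L - 1 : ℕ) : ZMod L) = 0 := by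
    rw [← Nat.cast_one, ← Nat.cast_add, Nat.add_sub_cancel' hL, ZMod.natCast_self]
  simpa [hL'] using hwalk

theorem isCycleThroughEdge_of_isLeast {u v : V} {k : ℕ} (huv : Adj u v)
    (hk : IsLeast {m | HasWalk Adj m v u} k) : IsCycleThroughEdge Adj u v (k + 1) := by
  obtain ⟨W, hW0, hWk, hW⟩ := exists_adj_seq_of_hasWalk hk.1
  have hWinj : ∀ a b, a < b → b ≤ k → W a ≠ W b := by
    intro a b hab hbk hab'
    have h₁ : HasWalk Adj a v (W b) := by
      simpa [hW0, hab'] using hasWalk_of_adj_seq W hW (a := 0) (n := a) (by omega)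
    have h₂ : HasWalk Adj (k - b) (W b) u := by
      simpa [Nat.add_sub_cancel' hbk, hWk] using
        hasWalk_of_adj_seq W hW (a := b) (n := k - b) (by omega)
    have := hk.2 (h₁.append_s5 h₂)
    omega
  refine ⟨k.succ_pos, fun i => W (i - 1).val, ?_, ?_, ?_, ?_⟩
  · intro i j hij
    have hi := ZMod.val_lt (i - 1)
    have hj := ZMod.val_lt (j - 1)
    have hval : (i - 1).val = (j - 1).val := by
      by_contra hne
      rcases Nat.lt_or_gt_of_ne hne with h | h
      · exact hWinj _ _ h (by omega) hij
      · exact hWinj _ _ h (by omega) hij.symm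
    exact sub_left_injective (ZMod.val_injective _ hval)
  · intro i
    simp only [add_sub_cancel_right]
    obtain ⟨j, rfl⟩ : ∃ j, i = j + 1 := ⟨i - 1, by ring⟩
    rw [add_sub_cancel_right]
    rcases (Nat.lt_succ_iff.mp (ZMod.val_lt j)).lt_or_eq with hj | hj
    · have hk0 : 0 < k := by omega
      rw [ZMod.val_add, ZMod.val_one_eq_one_mod, Nat.mod_eq_of_lt (by omega : 1 < k + 1),
        Nat.mod_eq_of_lt (by omega)]
      exact hW _ hj
    · have hj' : j = -1 := ZMod.val_injective _ (hj.trans (ZMod.val_neg_one k).symm)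
      simpa [hj', ZMod.val_neg_one, hWk, hW0] using huv
  · simpa [ZMod.val_neg_one] using hWk
  · simpa using hW0

theorem cycleLen_eq_of_isLeast {u v : V} {k : ℕ} (huv : Adj u v)
    (hk : IsLeast {m | HasWalk Adj m v u} k) : cycleLen Adj u v = k + 1 := by
  refine IsLeast.csInf_eq ⟨isCycleThroughEdge_of_isLeast huv hk, fun L hL => ?_⟩
  have := hk.2 hL.hasWalk_s5
  have := hL.1
  omega

end Digraph

namespace KautzVertex

variable {d D : ℕ}

theorem isKautzWord_snoc_tail {w : Fin (D + 1) → Fin (d + 1)} (hw : IsKautzWord d (D + 1) w)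
    {a : Fin (d + 1)} (ha : w (Fin.last D) ≠ a) :
    IsKautzWord d (D + 1) (Fin.snoc (α := fun _ => Fin (d + 1)) (Fin.tail w) a) := by
  intro i hi
  rcases (Nat.lt_succ_iff.mp hi).lt_or_eq with hi | rfl
  · have h₁ : (⟨i, by omega⟩ : Fin (D + 1)) = (⟨i, by omega⟩ : Fin D).castSucc := rfl
    have h₂ : (⟨i + 1, by omega⟩ : Fin (D + 1)) = (⟨i + 1, hi⟩ : Fin D).castSucc := rfl
    rw [h₁, h₂, Fin.snoc_castSucc, Fin.snoc_castSucc]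
    exact hw (i + 1) (by omega)
  · have h₁ : (⟨i, by omega⟩ : Fin (i + 1 + 1)) = Fin.castSucc ⟨i, by omega⟩ := rfl
    rw [h₁, Fin.snoc_castSucc, show (⟨i + 1, hi⟩ : Fin (i + 1 + 1)) = Fin.last _ from rfl,
      Fin.snoc_last]
    exact ha

def shiftAppend (x : KautzVertex d D) (a : Fin (d + 1)) (ha : x.1 (Fin.last D) ≠ a) :
    KautzVertex d D :=
  ⟨Fin.snoc (Fin.tail x.1) a, isKautzWord_snoc_tail x.2 ha⟩

theorem adj_shiftAppend (x : KautzVertex d D) (a : Fin (d + 1)) (ha : x.1 (Fin.last D) ≠ a) :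
    KautzAdj d D x (x.shiftAppend a ha) :=
  fun _ => Fin.snoc_castSucc (α := fun _ => Fin (d + 1)) ..

theorem shiftAppend_last (x : KautzVertex d D) (a : Fin (d + 1)) (ha : x.1 (Fin.last D) ≠ a) :
    (x.shiftAppend a ha).1 (Fin.last D) = a := Fin.snoc_last (α := fun _ => Fin (d + 1)) ..

theorem apply_eq_of_hasWalk {m : ℕ} {x y : KautzVertex d D}
    (h : HasWalk (KautzAdj d D) m x y) (i : ℕ) (hi : m + i ≤ D) :
    y.1 ⟨i, by omega⟩ = x.1 ⟨m + i, by omega⟩ := by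
  induction m generalizing x with
  | zero =>
    obtain rfl : x = y := h
    simp
  | succ m ih =>
    obtain ⟨w, hxw, hwy⟩ := h
    rw [ih hwy (by omega)]
    exact (hxw ⟨m + i, by omega⟩).trans (congrArg x.1 (Fin.ext (by simp; omega)))

theorem hasWalk_of_shift {m : ℕ} {x y : KautzVertex d D} (hm : m ≤ D + 1)
    (hxy : ∀ i (hi : m + i ≤ D), x.1 ⟨m + i, by omega⟩ = y.1 ⟨i, by omega⟩)
    (hlast : ∀ hm : 0 < m, x.1 (Fin.last D) ≠ y.1 ⟨D + 1 - m, by omega⟩) :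
    HasWalk (KautzAdj d D) m x y := by
  induction m generalizing x with
  | zero =>
    refine Subtype.ext (funext fun j => ?_)
    simpa using hxy j (by omega)
  | succ m ih =>
    have ha : x.1 (Fin.last D) ≠ y.1 ⟨D - m, by omega⟩ := by
      simpa using hlast m.succ_pos
    refine ⟨x.shiftAppend _ ha, adj_shiftAppend x _ ha,
      ih (by omega) (fun i hi => ?_) fun hm => ?_⟩
    · rcases hi.lt_or_eq with hi | hi
      · rw [← hxy i (by omega)]
        exact (adj_shiftAppend x _ ha ⟨m + i, hi⟩).trans
          (congrArg x.1 (Fin.ext (by simp; omega)))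
      · rw [show (⟨m + i, by omega⟩ : Fin (D + 1)) = Fin.last D from Fin.ext hi,
          shiftAppend_last]
        exact congrArg y.1 (Fin.ext (by simp; omega))
    · rw [shiftAppend_last]
      convert y.2 (D - m) (by omega) using 3
      omega

end KautzVertex

section Overlap

variable {d D : ℕ} {u v : KautzVertex d D}

theorem overlap_of_hasWalk {m : ℕ} (h : HasWalk (KautzAdj d D) m v u) (hm : m ≤ D + 1) :
    Overlap d D u v (D + 1 - m) :=
  ⟨by omega, fun i hi => by
    rw [KautzVertex.apply_eq_of_hasWalk h i (by omega)]
    exact congrArg v.1 (Fin.ext (by simp; omega))⟩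

theorem isLeast_hasWalk_of_overlap {r : ℕ} (hr : Overlap d D u v r)
    (hmax : ∀ t, Overlap d D u v t → t ≤ r) :
    IsLeast {m | HasWalk (KautzAdj d D) m v u} (D + 1 - r) := by
  obtain ⟨hrD, hvu⟩ := hr
  have hjunction (hr : r < D + 1) : v.1 (Fin.last D) ≠ u.1 ⟨r, hr⟩ := by
    intro hlast
    rcases Nat.eq_zero_or_pos r with rfl | hr₀
    · have hlast_eq (i : ℕ) (hi : i < 1) :
          v.1 ⟨D + 1 - 1 + i, by omega⟩ = u.1 ⟨i, by omega⟩ := by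
        obtain rfl : i = 0 := by omega
        exact hlast
      have := hmax 1 ⟨le_add_self, hlast_eq⟩
      omega
    · apply u.2 (r - 1) (by omega)
      rw [← hvu (r - 1) (by omega)]
      convert hlast using 2 <;> ext <;> simp <;> omega
  refine ⟨KautzVertex.hasWalk_of_shift (by omega) (fun i hi => hvu i (by omega)) fun hm => ?_,
    fun m hm => ?_⟩
  · convert hjunction (by omega) using 3
    omega
  · by_contra! hlt
    have := hmax _ (overlap_of_hasWalk hm (by omega))
    omega

end Overlap

theorem cycleLen_eq_of_overlap_general (d D : ℕ)
    (u v : KautzVertex d D) (huv : KautzAdj d D u v) (r : ℕ)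
    (hr : Overlap d D u v r) (hmax : ∀ t, Overlap d D u v t → t ≤ r) :
    cycleLen (KautzAdj d D) u v = D + 2 - r := by
  rw [cycleLen_eq_of_isLeast huv (isLeast_hasWalk_of_overlap hr hmax)]
  have := hr.1
  omega

/-- If `r` is the largest `t ∈ {0, …, D+1}` such that the
suffix of `v` of length `t` equals the prefix of `u` of length `t`, then the
shortest directed cycle through the edge `u → v` of `K(d, D)` has length
exactly `D + 2 − r`. -/
theorem cycleLen_eq_of_overlap (d D : ℕ) (hd : 2 ≤ d) (hD : 1 ≤ D)
    (u v : KautzVertex d D) (huv : KautzAdj d D u v) (r : ℕ)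
    (hr : Overlap d D u v r) (hmax : ∀ t, Overlap d D u v t → t ≤ r) :
    cycleLen (KautzAdj d D) u v = D + 2 - r :=
  cycleLen_eq_of_overlap_general d D u v huv r hr hmax
end

section
/- Let d ≥ 2 and D ≥ 1. For every directed edge uv of the Kautz digraph K(d, D), there is a unique shortest directed cycle of K(d, D) containing the edge uv: any two directed cycles through uv of minimal length coincide. -/
/-! The arc `u → v` spells a Kautz word `a₀ a₁ ⋯ a_{D+1}`. Repeating `a₀ ⋯ a_D` (if `a_{D+1} = a₀`)
or `a₀ ⋯ a_{D+1}` (otherwise) periodically gives a closed walk of length at most `D + 2` through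
`u → v`, and shortcutting repeated vertices turns it into a cycle; hence a shortest cycle through
`u → v` has length `L ≤ D + 2`. Along a closed walk every arc shifts the word by one letter, so a
letter of any vertex can be read off either `v`, going forward, or `u`, going around the rest of
the walk; when `L ≤ D + 2` one of the two always stays inside the word, so the walk is determined
by `u` and `v`. -/

section Walks

variable {V : Type*} {Adj : V → V → Prop}

lemma exists_walk_shortcut {f : ℕ → V} {m i j : ℕ} (hf : ∀ k < m, Adj (f k) (f (k + 1)))
    (hij : i < j) (hjm : j ≤ m) (heq : f i = f j) :
    ∃ g : ℕ → V, g 0 = f 0 ∧ g (m - (j - i)) = f m ∧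
      ∀ k < m - (j - i), Adj (g k) (g (k + 1)) := by
  refine ⟨fun k => if k < i then f k else f (k + (j - i)), ?_, ?_, fun k hk => ?_⟩
  all_goals dsimp only
  · rcases Nat.eq_zero_or_pos i with rfl | hi
    · simp [heq]
    · simp [hi]
  · rw [if_neg (by omega)]
    congr 1
    omega
  · by_cases hki : k + 1 < i
    · rw [if_pos (by omega), if_pos hki]
      exact hf k (by omega)
    by_cases hk : k < i
    · have hstep := hf k (by omega)
      rw [if_pos hk, if_neg hki, show k + 1 + (j - i) = j by omega, ← heq]
      rwa [show k + 1 = i by omega] at hstep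
    · rw [if_neg hk, if_neg hki, show k + 1 + (j - i) = k + (j - i) + 1 by omega]
      exact hf _ (by omega)

lemma exists_injOn_walk {f : ℕ → V} {m : ℕ} (hf : ∀ k < m, Adj (f k) (f (k + 1))) :
    ∃ (g : ℕ → V) (n : ℕ), n ≤ m ∧ g 0 = f 0 ∧ g n = f m ∧
      (∀ k < n, Adj (g k) (g (k + 1))) ∧ Set.InjOn g (Set.Iic n) := by
  induction m using Nat.strong_induction_on generalizing f with
  | _ m ih =>
  by_cases hinj : Set.InjOn f (Set.Iic m)
  · exact ⟨f, m, le_rfl, rfl, rfl, hf, hinj⟩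
  have shorten : ∀ i j, i < j → j ≤ m → f i = f j → ∃ (g : ℕ → V) (n : ℕ), n ≤ m ∧
      g 0 = f 0 ∧ g n = f m ∧ (∀ k < n, Adj (g k) (g (k + 1))) ∧ Set.InjOn g (Set.Iic n) := by
    intro i j hij hjm heq
    obtain ⟨g, hg0, hgm, hg⟩ := exists_walk_shortcut hf hij hjm heq
    obtain ⟨g', n, hn, hg'0, hg'n, hg', hinj'⟩ := ih _ (by omega) hg
    exact ⟨g', n, by omega, hg'0.trans hg0, hg'n.trans hgm, hg', hinj'⟩
  obtain ⟨i, hi, j, hj, heq, hne⟩ : ∃ i ∈ Set.Iic m, ∃ j ∈ Set.Iic m, f i = f j ∧ i ≠ j := by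
    simpa [Set.InjOn] using hinj
  rcases lt_or_gt_of_ne hne with h | h
  · exact shorten i j h hj heq
  · exact shorten j i h hi heq.symm

lemma isCycleThroughEdge_of_injOn_walk {u v : V} (huv : Adj u v) {g : ℕ → V} {n : ℕ}
    (hg0 : g 0 = v) (hgn : g n = u) (hg : ∀ k < n, Adj (g k) (g (k + 1)))
    (hinj : Set.InjOn g (Set.Iic n)) : IsCycleThroughEdge Adj u v (n + 1) := by
  have hval : ∀ x : ZMod (n + 1), (x - 1).val ∈ Set.Iic n :=
    fun x => Nat.lt_succ_iff.1 (ZMod.val_lt _)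
  refine ⟨n.succ_pos, fun x => g (x - 1).val, fun x y hxy => ?_, fun x => ?_, ?_, ?_⟩
  · simpa using ZMod.val_injective _ (hinj (hval x) (hval y) hxy)
  · rcases (Nat.lt_succ_iff.1 (ZMod.val_lt (x - 1))).lt_or_eq with hlt | hn
    · have hsucc : (x + 1 - 1).val = (x - 1).val + 1 := by
        rw [show x + 1 - 1 = (x - 1) + 1 by ring, ZMod.val_add, ZMod.val_one_eq_one_mod,
          Nat.add_mod_mod, Nat.mod_eq_of_lt (by omega)]
      simp only [hsucc]
      exact hg _ hlt
    · have hx : x = 0 := by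
        have h : x - 1 = -1 := ZMod.val_injective _ (hn.trans (ZMod.val_neg_one n).symm)
        linear_combination h
      simpa [hx, ZMod.val_neg_one, hgn, hg0] using huv
  · simpa [ZMod.val_neg_one] using hgn
  · simpa using hg0

lemma exists_cycle_of_walk {u v : V} (huv : Adj u v) {f : ℕ → V} {m : ℕ}
    (hf0 : f 0 = v) (hfm : f m = u) (hf : ∀ k < m, Adj (f k) (f (k + 1))) :
    ∃ L ≤ m + 1, IsCycleThroughEdge Adj u v L := by
  obtain ⟨g, n, hnm, hg0, hgn, hg, hinj⟩ := exists_injOn_walk hf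
  exact ⟨n + 1, by omega,
    isCycleThroughEdge_of_injOn_walk huv (hg0.trans hf0) (hgn.trans hfm) hg hinj⟩

end Walks

lemma apply_mod_ne_apply_succ_mod {α : Type*} {x : ℕ → α} {P : ℕ}
    (hx : ∀ k, k + 1 < P → x k ≠ x (k + 1)) (hwrap : x (P - 1) ≠ x 0) (hP : 0 < P) (n : ℕ) :
    x (n % P) ≠ x ((n + 1) % P) := by
  rw [← Nat.mod_add_mod]
  obtain hlt | heq : n % P + 1 < P ∨ n % P + 1 = P := by
    have := Nat.mod_lt n hP
    omega
  · rw [Nat.mod_eq_of_lt hlt]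
    exact hx _ hlt
  · rw [heq, Nat.mod_self, show n % P = P - 1 by omega]
    exact hwrap

section KautzWindows

variable {d : ℕ}

def kautzWindow (D : ℕ) (s : ℕ → Fin (d + 1)) (hs : ∀ n, s n ≠ s (n + 1)) (n : ℕ) :
    KautzVertex d D :=
  ⟨fun i => s (n + i), fun i _ => hs (n + i)⟩

variable {D : ℕ} {s : ℕ → Fin (d + 1)} {hs : ∀ n, s n ≠ s (n + 1)}

lemma kautzAdj_kautzWindow (n : ℕ) :
    KautzAdj d D (kautzWindow D s hs n) (kautzWindow D s hs (n + 1)) :=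
  fun i => congrArg s (by simp only [Fin.val_succ, Fin.val_castSucc]; omega)

lemma kautzWindow_add_period {P : ℕ} (hper : ∀ n, s (n + P) = s n) (n : ℕ) :
    kautzWindow D s hs (n + P) = kautzWindow D s hs n :=
  Subtype.ext <| funext fun i => by
    simp only [kautzWindow]
    rw [show n + P + i = n + i + P by omega, hper]

end KautzWindows

lemma exists_periodic_seq_kautzWindow {d D : ℕ} (hD : 1 ≤ D) {u v : KautzVertex d D}
    (huv : KautzAdj d D u v) :
    ∃ (s : ℕ → Fin (d + 1)) (hs : ∀ n, s n ≠ s (n + 1)) (P : ℕ), 0 < P ∧ P ≤ D + 2 ∧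
      (∀ n, s (n + P) = s n) ∧ kautzWindow D s hs 0 = u ∧ kautzWindow D s hs 1 = v := by
  -- `x` spells the word `a₀ a₁ ⋯ a_{D+1}` with `u = a₀ ⋯ a_D` and `v = a₁ ⋯ a_{D+1}`.
  set x : ℕ → Fin (d + 1) := fun k => if k = 0 then u.1 0 else v.1 (Fin.ofNat (D + 1) (k - 1))
    with hx
  have hxv : ∀ i : Fin (D + 1), x (i.val + 1) = v.1 i := fun i => by
    simp [hx]
  have hxu : ∀ i : Fin (D + 1), x i.val = u.1 i := by
    rintro ⟨_ | i, hi⟩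
    · rfl
    · rw [hxv ⟨i, by omega⟩]
      exact huv ⟨i, by omega⟩
  have hxK : ∀ k ≤ D, x k ≠ x (k + 1) := by
    rintro (_ | k) hk
    · rw [hxu ⟨0, by omega⟩, hxu ⟨1, by omega⟩]
      exact u.2 0 (by omega)
    · rw [hxv ⟨k, by omega⟩, hxv ⟨k + 1, by omega⟩]
      exact v.2 k (by omega)
  -- period `D + 1` if `a_{D+1} = a₀`, period `D + 2` otherwise
  obtain ⟨P, hP1, hP2, hwrap, hlast⟩ : ∃ P, D + 1 ≤ P ∧ P ≤ D + 2 ∧ x (P - 1) ≠ x 0 ∧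
      x ((D + 1) % P) = x (D + 1) := by
    by_cases hcase : x (D + 1) = x 0
    · exact ⟨D + 1, le_rfl, by omega, hcase ▸ hxK D le_rfl, by rw [Nat.mod_self, hcase]⟩
    · exact ⟨D + 2, by omega, le_rfl, by simpa using hcase, by rw [Nat.mod_eq_of_lt (by omega)]⟩
  have hsx : ∀ k ≤ D + 1, x (k % P) = x k := fun k hk => by
    rcases lt_or_eq_of_le hk with hk | rfl
    · rw [Nat.mod_eq_of_lt (by omega)]
    · exact hlast
  refine ⟨fun n => x (n % P), apply_mod_ne_apply_succ_mod (fun k hk => hxK k (by omega)) hwrap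
    (by omega), P, by omega, hP2, fun n => by simp only [Nat.add_mod_right], ?_, ?_⟩ <;>
    refine Subtype.ext (funext fun i => ?_)
  · change x ((0 + i.val) % P) = u.1 i
    rw [zero_add, hsx _ (by omega), hxu]
  · change x ((1 + i.val) % P) = v.1 i
    rw [hsx _ (by omega), Nat.add_comm 1, hxv]

lemma exists_cycleThroughEdge_le {d D : ℕ} (hD : 1 ≤ D) {u v : KautzVertex d D}
    (huv : KautzAdj d D u v) : ∃ L ≤ D + 2, IsCycleThroughEdge (KautzAdj d D) u v L := by
  obtain ⟨s, hs, P, hP0, hPD, hper, hu, hv⟩ := exists_periodic_seq_kautzWindow hD huv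
  have hback : kautzWindow D s hs (P - 1 + 1) = u := by
    rw [Nat.sub_add_cancel hP0, ← hu, ← kautzWindow_add_period hper 0, zero_add]
  obtain ⟨L, hLP, hL⟩ := exists_cycle_of_walk huv (f := fun k => kautzWindow D s hs (k + 1))
    hv hback (fun k _ => kautzAdj_kautzWindow (k + 1))
  exact ⟨L, by omega, hL⟩

section ClosedWalks

variable {d D : ℕ}

lemma kautzAdj_walk_letter {ι : Type*} [AddMonoidWithOne ι] {c : ι → KautzVertex d D}
    (hc : ∀ i, KautzAdj d D (c i) (c (i + 1))) (a : ι) :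
    ∀ (m i : ℕ) (h : i + m ≤ D), (c (a + m)).1 ⟨i, by omega⟩ = (c a).1 ⟨i + m, by omega⟩
  | 0, i, _ => by simp
  | m + 1, i, h => by
    rw [Nat.cast_succ, ← add_assoc]
    refine (hc (a + m) ⟨i, by omega⟩).trans ?_
    refine (kautzAdj_walk_letter hc a m (i + 1) (by omega)).trans ?_
    exact congrArg (c a).1 (Fin.ext (by simp only; omega))

variable {L : ℕ} {c : ZMod L → KautzVertex d D}

lemma kautzAdj_closedWalk_letter (hL : L ≤ D + 2) (hc : ∀ i, KautzAdj d D (c i) (c (i + 1)))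
    (t : ℕ) (ht : t < L) (i : Fin (D + 1)) :
    (c (1 + t)).1 i = if h : i.val + t ≤ D then (c 1).1 ⟨i + t, by omega⟩
      else (c 0).1 ⟨i + t + 1 - L, by omega⟩ := by
  split_ifs with h
  · exact kautzAdj_walk_letter hc 1 t i h
  · have hback : (1 + t : ZMod L) + ((L - 1 - t : ℕ) : ZMod L) = 0 := by
      rw [← Nat.cast_one, ← Nat.cast_add, ← Nat.cast_add, show 1 + t + (L - 1 - t) = L by omega,
        ZMod.natCast_self]
    have key := kautzAdj_walk_letter hc (1 + t) (L - 1 - t) (i + t + 1 - L) (by omega)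
    rw [hback] at key
    exact (congrArg _ (Fin.ext (by simp only; omega))).trans key.symm

lemma eq_of_kautzAdj_closedWalk [NeZero L] (hL : L ≤ D + 2) {c' : ZMod L → KautzVertex d D}
    (hc : ∀ i, KautzAdj d D (c i) (c (i + 1))) (hc' : ∀ i, KautzAdj d D (c' i) (c' (i + 1)))
    (h0 : c 0 = c' 0) (h1 : c 1 = c' 1) : c = c' := by
  funext z
  obtain ⟨t, ht, rfl⟩ : ∃ t < L, 1 + (t : ZMod L) = z :=
    ⟨(z - 1).val, ZMod.val_lt _, by rw [ZMod.natCast_zmod_val]; ring⟩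
  refine Subtype.ext (funext fun i => ?_)
  rw [kautzAdj_closedWalk_letter hL hc t ht, kautzAdj_closedWalk_letter hL hc' t ht, h0, h1]

end ClosedWalks

theorem shortest_cycle_unique_general (d D : ℕ) (hD : 1 ≤ D)
    (u v : KautzVertex d D) (huv : KautzAdj d D u v) (L : ℕ) (hL : 0 < L)
    (hmin : ∀ L', IsCycleThroughEdge (KautzAdj d D) u v L' → L ≤ L')
    (c₁ c₂ : ZMod L → KautzVertex d D)
    (hc₁adj : ∀ i, KautzAdj d D (c₁ i) (c₁ (i + 1)))
    (hc₁u : c₁ 0 = u) (hc₁v : c₁ 1 = v)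
    (hc₂adj : ∀ i, KautzAdj d D (c₂ i) (c₂ (i + 1)))
    (hc₂u : c₂ 0 = u) (hc₂v : c₂ 1 = v) :
    c₁ = c₂ := by
  obtain ⟨L', hL'D, hcycle⟩ := exists_cycleThroughEdge_le hD huv
  have : NeZero L := ⟨hL.ne'⟩
  exact eq_of_kautzAdj_closedWalk ((hmin L' hcycle).trans hL'D) hc₁adj hc₂adj
    (hc₁u.trans hc₂u.symm) (hc₁v.trans hc₂v.symm)

/-- For every directed edge `u → v` of `K(d, D)` (with
`d ≥ 2`, `D ≥ 1`), the shortest directed cycle through `u → v` is unique: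
any two directed cycles through `u → v` of minimal length coincide. -/
theorem shortest_cycle_unique (d D : ℕ) (hd : 2 ≤ d) (hD : 1 ≤ D)
    (u v : KautzVertex d D) (huv : KautzAdj d D u v) (L : ℕ) (hL : 0 < L)
    (hmin : ∀ L', IsCycleThroughEdge (KautzAdj d D) u v L' → L ≤ L')
    (c₁ c₂ : ZMod L → KautzVertex d D)
    (hc₁inj : Function.Injective c₁)
    (hc₁adj : ∀ i, KautzAdj d D (c₁ i) (c₁ (i + 1)))
    (hc₁u : c₁ 0 = u) (hc₁v : c₁ 1 = v)
    (hc₂inj : Function.Injective c₂)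
    (hc₂adj : ∀ i, KautzAdj d D (c₂ i) (c₂ (i + 1)))
    (hc₂u : c₂ 0 = u) (hc₂v : c₂ 1 = v) :
    c₁ = c₂ :=
  shortest_cycle_unique_general d D hD u v huv L hL hmin c₁ c₂ hc₁adj hc₁u hc₁v hc₂adj hc₂u hc₂v
end

section
/- Let q ≥ 2 and n ≥ 3. The number of functions f : ZMod n → Fin q satisfying f(i) ≠ f(i+1) for all i ∈ ZMod n (proper q-colorings of the cycle C_n) that are aperiodic — i.e., f(· + s) = f only for s = 0 in ZMod n — equals ∑_{j | n} μ(j) · (q−1)^{n/j}, where μ is the Möbius function and the sum is over positive divisors j of n. Equivalently, the number of rotation classes of such aperiodic proper colorings is (1/n) ∑_{j | n} μ(j) (q−1)^{n/j}. -/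
/-- A proper `q`-coloring of the directed cycle `C_n`. -/
def IsProperColoring (n q : ℕ) (f : ZMod n → Fin q) : Prop :=
  ∀ i, f i ≠ f (i + 1)

/-- A coloring of `C_n` is aperiodic (primitive) if its only rotational
symmetry is the trivial one. -/
def IsAperiodic (n q : ℕ) (f : ZMod n → Fin q) : Prop :=
  ∀ s : ZMod n, (∀ i, f (i + s) = f i) → s = 0

/-- Rotation equivalence of colorings of `C_n`. -/
def RotEquiv (n q : ℕ) (f g : ZMod n → Fin q) : Prop :=
  ∃ s : ZMod n, ∀ i, f (i + s) = g i

open Function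

theorem Nat.card_subtype_and_not_add_card_subtype_and {X : Type*} [Finite X] (p r : X → Prop) :
    Nat.card {x // p x ∧ ¬r x} + Nat.card {x // p x ∧ r x} = Nat.card {x // p x} := by
  classical
  rw [← Nat.card_sum]
  exact Nat.card_congr <| (Equiv.sumCongr (Equiv.subtypeSubtypeEquivSubtypeInter p (¬r ·)).symm
    (Equiv.subtypeSubtypeEquivSubtypeInter p r).symm).trans
      ((Equiv.sumComm _ _).trans (Equiv.sumCompl _))

theorem Nat.card_subtype_ne {α : Type*} [Finite α] (b : α) :
    (Nat.card {a // b ≠ a} : ℤ) = Nat.card α - 1 := by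
  have := Fintype.ofFinite α
  classical
  rw [Nat.card_eq_fintype_card, Nat.card_eq_fintype_card, Fintype.card_subtype_compl,
    Fintype.card_subtype_eq', Nat.cast_sub (Fintype.card_pos_iff.2 ⟨b⟩), Nat.cast_one]

theorem Nat.card_subtype_eq_sum_card_fiberwise {X ι : Type*} [Finite X] {p : X → Prop}
    {φ : X → ι} {s : Finset ι} (H : ∀ x, p x → φ x ∈ s) :
    Nat.card {x // p x} = ∑ i ∈ s, Nat.card {x // p x ∧ φ x = i} := by
  classical
  have := Fintype.ofFinite X
  simp only [Nat.card_eq_fintype_card, Fintype.card_subtype]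
  rw [Finset.card_eq_sum_card_fiberwise (f := φ) (t := s) fun x hx => H x (by simpa using hx)]
  simp only [Finset.filter_filter]

def IsProperPath {α : Type*} {k : ℕ} (w : Fin (k + 1) → α) : Prop :=
  ∀ i : Fin k, w i.castSucc ≠ w i.succ

section ProperPath
variable {α : Type*} {k : ℕ}

theorem isProperPath_snoc {w : Fin (k + 1) → α} {a : α} :
    IsProperPath (Fin.snoc w a : Fin (k + 2) → α) ↔
      IsProperPath w ∧ w (Fin.last k) ≠ a := by
  simp only [IsProperPath, Fin.forall_fin_succ', Fin.succ_last, Fin.snoc_last,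
    Fin.succ_castSucc, Fin.snoc_castSucc]

theorem isProperPath_iff_init {w : Fin (k + 2) → α} :
    IsProperPath w ↔
      IsProperPath (Fin.init w) ∧ Fin.init w (Fin.last k) ≠ w (Fin.last _) := by
  conv_lhs => rw [← Fin.snoc_init_self w]
  exact isProperPath_snoc

def properPathSnocEquiv :
    (Σ w : {w : Fin (k + 1) → α // IsProperPath w}, {a // w.1 (Fin.last k) ≠ a}) ≃
      {w : Fin (k + 2) → α // IsProperPath w} where
  toFun p := ⟨Fin.snoc p.1.1 p.2.1, isProperPath_snoc.2 ⟨p.1.2, p.2.2⟩⟩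
  invFun w := ⟨⟨Fin.init w.1, (isProperPath_iff_init.1 w.2).1⟩,
    ⟨w.1 (Fin.last _), (isProperPath_iff_init.1 w.2).2⟩⟩
  left_inv _ := Sigma.subtype_ext (Subtype.ext (Fin.init_snoc (α := fun _ => α) _ _))
    (Fin.snoc_last (α := fun _ => α) _ _)
  right_inv w := Subtype.ext (Fin.snoc_init_self w.1)

theorem card_properPath [Finite α] (k : ℕ) :
    (Nat.card {w : Fin (k + 1) → α // IsProperPath w} : ℤ) =
      Nat.card α * (Nat.card α - 1) ^ k := by
  induction k with
  | zero =>
    rw [Nat.card_congr (Equiv.subtypeUnivEquiv (p := IsProperPath) fun _ i => i.elim0),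
      Nat.card_fun]
    simp
  | succ k ih =>
    have := Fintype.ofFinite {w : Fin (k + 1) → α // IsProperPath w}
    rw [← Nat.card_congr properPathSnocEquiv, Nat.card_sigma, Nat.cast_sum]
    simp only [Nat.card_subtype_ne, Finset.sum_const, Finset.card_univ,
      ← Nat.card_eq_fintype_card, nsmul_eq_mul, ih]
    ring

def closedPathInitEquiv :
    {w : Fin (k + 2) → α // IsProperPath w ∧ w (Fin.last _) = w 0} ≃
      {w : Fin (k + 1) → α // IsProperPath w ∧ w (Fin.last k) ≠ w 0} where
  toFun w := ⟨Fin.init w.1, by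
    obtain ⟨hw, hclosed⟩ := w.2
    rw [isProperPath_iff_init, hclosed] at hw
    exact hw⟩
  invFun w := ⟨Fin.snoc w.1 (w.1 0), by
    refine ⟨isProperPath_snoc.2 w.2, ?_⟩
    simp only [Fin.snoc_last]
    exact (Fin.snoc_castSucc (α := fun _ => α) _ _ 0).symm⟩
  left_inv w := by
    refine Subtype.ext ?_
    conv_rhs => rw [← Fin.snoc_init_self w.1]
    simp [w.2.2, Fin.init]
  right_inv _ := Subtype.ext (Fin.init_snoc (α := fun _ => α) _ _)

end ProperPath

theorem isProperColoring_iff_isProperPath {q k : ℕ} (f : ZMod (k + 1) → Fin q) :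
    IsProperColoring (k + 1) q f ↔
      IsProperPath (f : Fin (k + 1) → Fin q) ∧ f (Fin.last k) ≠ f 0 := by
  -- `ZMod (k + 1)` is `Fin (k + 1)` by definition, with the same (wrapping) addition.
  change (∀ i : Fin (k + 1), f i ≠ f (i + (1 : Fin (k + 1)))) ↔ _
  simp only [IsProperPath, Fin.forall_fin_succ', Fin.coeSucc_eq_succ, Fin.last_add_one]
  rfl

section Cycle
variable {q : ℕ}

theorem card_properColoring_succ_eq_card_properPath (k : ℕ) :
    Nat.card {f : ZMod (k + 1) → Fin q // IsProperColoring (k + 1) q f} =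
      Nat.card {w : Fin (k + 1) → Fin q // IsProperPath w ∧ w (Fin.last k) ≠ w 0} :=
  Nat.card_congr (Equiv.subtypeEquivRight isProperColoring_iff_isProperPath)

theorem card_properColoring_add_two_add_card_properColoring_add_one (k : ℕ) :
    (Nat.card {f : ZMod (k + 2) → Fin q // IsProperColoring (k + 2) q f} : ℤ) +
      Nat.card {f : ZMod (k + 1) → Fin q // IsProperColoring (k + 1) q f} =
      q * (q - 1) ^ (k + 1) := by
  rw [card_properColoring_succ_eq_card_properPath (k + 1),
    card_properColoring_succ_eq_card_properPath k,
    ← Nat.card_congr (closedPathInitEquiv (k := k)), ← Nat.cast_add]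
  simp only [ne_eq]
  rw [Nat.card_subtype_and_not_add_card_subtype_and, card_properPath, Nat.card_eq_fintype_card,
    Fintype.card_fin]

theorem card_properColoring_one : Nat.card {f : ZMod 1 → Fin q // IsProperColoring 1 q f} = 0 :=
  have : IsEmpty {f : ZMod 1 → Fin q // IsProperColoring 1 q f} :=
    ⟨fun f => f.2 0 (congrArg f.1 (Subsingleton.elim _ _))⟩
  Nat.card_of_isEmpty

theorem card_properColoring {m : ℕ} (hm : 1 ≤ m) :
    (Nat.card {f : ZMod m → Fin q // IsProperColoring m q f} : ℤ) =
      ((q : ℤ) - 1) ^ m + (-1) ^ m * ((q : ℤ) - 1) := by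
  induction m, hm using Nat.le_induction with
  | base => rw [card_properColoring_one]; ring
  | succ m hm ih =>
    obtain ⟨k, rfl⟩ := Nat.exists_eq_add_of_le' hm
    rw [eq_sub_of_add_eq (card_properColoring_add_two_add_card_properColoring_add_one k), ih]
    ring

end Cycle

namespace ZMod
variable {m e q : ℕ} {α : Type*}

def rotate (f : ZMod m → α) : ZMod m → α := fun i => f (i + 1)

theorem iterate_rotate (f : ZMod m → α) (k : ℕ) : rotate^[k] f = fun i => f (i + k) := by
  induction k generalizing f with
  | zero => simp
  | succ k ih => simp only [iterate_succ_apply, ih, rotate, Nat.cast_succ, add_assoc]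

theorem isPeriodicPt_rotate_iff {f : ZMod m → α} {k : ℕ} :
    IsPeriodicPt rotate k f ↔ ∀ i, f (i + k) = f i := by
  rw [IsPeriodicPt, IsFixedPt, iterate_rotate, funext_iff]

theorem isPeriodicPt_rotate_self (f : ZMod m → α) : IsPeriodicPt rotate m f :=
  isPeriodicPt_rotate_iff.2 fun i => by rw [natCast_self, add_zero]

theorem isAperiodic_iff_minimalPeriod_rotate_eq [NeZero m] (f : ZMod m → Fin q) :
    IsAperiodic m q f ↔ minimalPeriod rotate f = m := by
  constructor
  · intro hf
    refine Nat.dvd_antisymm (isPeriodicPt_rotate_self f).minimalPeriod_dvd ?_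
    rw [← natCast_eq_zero_iff]
    exact hf _ (isPeriodicPt_rotate_iff.1 (isPeriodicPt_minimalPeriod rotate f))
  · intro hf s hs
    rw [← natCast_zmod_val s] at hs ⊢
    have hdvd := (isPeriodicPt_rotate_iff.2 hs).minimalPeriod_dvd
    rwa [hf, ← natCast_eq_zero_iff] at hdvd

theorem isPeriodicPt_rotate_comp_castHom (h : e ∣ m) (g : ZMod e → α) (k : ℕ) :
    IsPeriodicPt rotate k (g ∘ castHom h (ZMod e)) ↔ IsPeriodicPt rotate k g := by
  simp only [isPeriodicPt_rotate_iff, comp_apply, map_add, map_natCast]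
  exact ((castHom_surjective h).forall (p := fun j => g (j + k) = g j)).symm

theorem minimalPeriod_rotate_comp_castHom (h : e ∣ m) (g : ZMod e → α) :
    minimalPeriod rotate (g ∘ castHom h (ZMod e)) = minimalPeriod rotate g :=
  minimalPeriod_eq_minimalPeriod_iff.2 (isPeriodicPt_rotate_comp_castHom h g)

theorem isProperColoring_comp_castHom (h : e ∣ m) (g : ZMod e → Fin q) :
    IsProperColoring m q (g ∘ castHom h (ZMod e)) ↔ IsProperColoring e q g := by
  simp only [IsProperColoring, comp_apply, map_add, map_one]
  exact ((castHom_surjective h).forall (p := fun j => g j ≠ g (j + 1))).symm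

theorem comp_castHom_of_isPeriodicPt [NeZero m] (h : e ∣ m) {f : ZMod m → α}
    (hf : IsPeriodicPt rotate e f) : (fun j : ZMod e => f j.val) ∘ castHom h (ZMod e) = f := by
  funext i
  rw [comp_apply, ← natCast_zmod_val i, map_natCast, val_natCast]
  conv_rhs => rw [← Nat.mod_add_div i.val e, Nat.cast_add]
  exact (isPeriodicPt_rotate_iff.1 (hf.mul_const _) _).symm

theorem card_properColoring_minimalPeriod_eq [NeZero m] (h : e ∣ m) :
    Nat.card {f : ZMod m → Fin q // IsProperColoring m q f ∧ minimalPeriod rotate f = e} =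
      Nat.card {g : ZMod e → Fin q // IsProperColoring e q g ∧ IsAperiodic e q g} := by
  have : NeZero e := ⟨fun he => NeZero.ne m (Nat.eq_zero_of_zero_dvd (he ▸ h))⟩
  have hmem (g : {g : ZMod e → Fin q // IsProperColoring e q g ∧ IsAperiodic e q g}) :
      IsProperColoring m q (g.1 ∘ castHom h (ZMod e)) ∧
        minimalPeriod rotate (g.1 ∘ castHom h (ZMod e)) = e := by
    rw [isProperColoring_comp_castHom, minimalPeriod_rotate_comp_castHom,
      ← isAperiodic_iff_minimalPeriod_rotate_eq]
    exact g.2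
  refine (Nat.card_congr (Equiv.ofBijective (fun g => ⟨g.1 ∘ castHom h (ZMod e), hmem g⟩)
    ⟨fun g g' hgg => ?_, ?_⟩)).symm
  · exact Subtype.ext ((castHom_surjective h).injective_comp_right (congrArg Subtype.val hgg))
  · rintro ⟨f, hproper, hper⟩
    have hfac := comp_castHom_of_isPeriodicPt h (hper ▸ isPeriodicPt_minimalPeriod rotate f)
    refine ⟨⟨fun j => f j.val, ?_, ?_⟩, Subtype.ext hfac⟩
    · rwa [← isProperColoring_comp_castHom h, hfac]
    · rwa [isAperiodic_iff_minimalPeriod_rotate_eq, ← minimalPeriod_rotate_comp_castHom h, hfac]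

theorem sum_card_aperiodic_properColoring [NeZero m] :
    ∑ e ∈ m.divisors,
        Nat.card {g : ZMod e → Fin q // IsProperColoring e q g ∧ IsAperiodic e q g} =
      Nat.card {f : ZMod m → Fin q // IsProperColoring m q f} := by
  rw [Nat.card_subtype_eq_sum_card_fiberwise (φ := minimalPeriod rotate) fun f _ =>
    Nat.mem_divisors.2 ⟨(isPeriodicPt_rotate_self f).minimalPeriod_dvd, NeZero.ne m⟩]
  exact Finset.sum_congr rfl fun e he =>
    (card_properColoring_minimalPeriod_eq (Nat.dvd_of_mem_divisors he)).symm

end ZMod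

namespace ArithmeticFunction

theorem eq_sum_moebius_mul_of_sum_divisors_eq {R : Type*} [Ring R] {f g : ℕ → R}
    (h : ∀ m > 0, ∑ d ∈ m.divisors, f d = g m) {n : ℕ} (hn : 0 < n) :
    f n = ∑ j ∈ n.divisors, (moebius j : R) * g (n / j) := by
  rw [← sum_eq_iff_sum_mul_moebius_eq.1 h n hn,
    Nat.sum_divisorsAntidiagonal fun i j => (moebius i : R) * g j]

theorem sum_moebius_mul_neg_one_pow {n : ℕ} (hn : 3 ≤ n) :
    ∑ j ∈ n.divisors, (moebius j : ℤ) * (-1) ^ (n / j) = 0 := by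
  have hdiv (m : ℕ) (hm : 0 < m) : ∑ d ∈ m.divisors,
      ((if d = 2 then 2 else 0) - if d = 1 then 1 else 0 : ℤ) = (-1) ^ m := by
    simp only [Finset.sum_sub_distrib, Finset.sum_ite_eq', Nat.mem_divisors, one_dvd, ne_eq,
      hm.ne', not_false_eq_true, and_true, if_true]
    rcases Nat.even_or_odd m with hm2 | hm2
    · rw [if_pos (even_iff_two_dvd.1 hm2), hm2.neg_one_pow]
      norm_num
    · rw [if_neg (mt even_iff_two_dvd.2 (Nat.not_even_iff_odd.2 hm2)), hm2.neg_one_pow]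
      norm_num
  have hinv := eq_sum_moebius_mul_of_sum_divisors_eq hdiv (n := n) (by omega)
  simp only [Int.cast_id] at hinv
  rw [← hinv, if_neg (by omega), if_neg (by omega), sub_zero]

end ArithmeticFunction

open ArithmeticFunction in
theorem card_aperiodic_properColoring {q n : ℕ} (hn : 3 ≤ n) :
    (Nat.card {f : ZMod n → Fin q // IsProperColoring n q f ∧ IsAperiodic n q f} : ℤ) =
      ∑ j ∈ n.divisors, (moebius j : ℤ) * ((q : ℤ) - 1) ^ (n / j) := by
  have hsum (m : ℕ) (hm : 0 < m) : ∑ e ∈ m.divisors,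
      (Nat.card {g : ZMod e → Fin q // IsProperColoring e q g ∧ IsAperiodic e q g} : ℤ) =
        Nat.card {f : ZMod m → Fin q // IsProperColoring m q f} := by
    have : NeZero m := ⟨hm.ne'⟩
    rw [← ZMod.sum_card_aperiodic_properColoring, Nat.cast_sum]
  rw [eq_sum_moebius_mul_of_sum_divisors_eq hsum (by omega)]
  calc _ = ∑ j ∈ n.divisors, ((moebius j : ℤ) * ((q : ℤ) - 1) ^ (n / j) +
          ((q : ℤ) - 1) * ((moebius j : ℤ) * (-1) ^ (n / j))) := by
        refine Finset.sum_congr rfl fun j hj => ?_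
        rw [Int.cast_id, card_properColoring (Nat.div_pos (Nat.divisor_le hj)
          (Nat.pos_of_mem_divisors hj))]
        ring
    _ = ∑ j ∈ n.divisors, (moebius j : ℤ) * ((q : ℤ) - 1) ^ (n / j) := by
        rw [Finset.sum_add_distrib, ← Finset.mul_sum, sum_moebius_mul_neg_one_pow hn, mul_zero,
          add_zero]

section Rotation
variable {n q : ℕ}

instance :
    AddAction (ZMod n) {f : ZMod n → Fin q // IsProperColoring n q f ∧ IsAperiodic n q f} where
  vadd s f := ⟨fun i => f.1 (i + s), fun i => by simpa only [add_right_comm] using f.2.1 (i + s),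
    fun t ht => f.2.2 t fun i => by simpa only [sub_add_cancel, add_right_comm] using ht (i - s)⟩
  zero_vadd f := Subtype.ext (funext fun i => congrArg f.1 (add_zero i))
  add_vadd s t f := Subtype.ext (funext fun i => congrArg f.1 (add_assoc i s t).symm)

theorem card_aperiodic_properColoring_eq_card_quot_mul [NeZero n] :
    Nat.card {f : ZMod n → Fin q // IsProperColoring n q f ∧ IsAperiodic n q f} =
      Nat.card (Quot fun a b :
        {f : ZMod n → Fin q // IsProperColoring n q f ∧ IsAperiodic n q f} =>
          RotEquiv n q a.1 b.1) * n := by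
  have hfree (f : {f : ZMod n → Fin q // IsProperColoring n q f ∧ IsAperiodic n q f}) :
      AddAction.stabilizer (ZMod n) f = ⊥ :=
    (AddSubgroup.eq_bot_iff_forall _).2 fun s hs => f.2.2 s (congrFun (congrArg Subtype.val hs))
  have hquot := Quot.congrRight (r := fun a b : {f : ZMod n → Fin q //
    IsProperColoring n q f ∧ IsAperiodic n q f} => RotEquiv n q a.1 b.1)
    (r' := AddAction.orbitRel (ZMod n) _) fun a b => by
    rw [Setoid.comm', AddAction.orbitRel_apply, AddAction.mem_orbit_iff]
    exact exists_congr fun s => by rw [Subtype.ext_iff, funext_iff]; rfl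
  rw [Nat.card_congr ((AddAction.selfEquivOrbitsQuotientProd hfree).trans
    (hquot.symm.prodCongr (Equiv.refl _))), Nat.card_prod, Nat.card_zmod]

end Rotation

open ArithmeticFunction in
theorem aperiodic_proper_colorings_count_general (q n : ℕ) (hn : 3 ≤ n) :
    (Nat.card {f : ZMod n → Fin q // IsProperColoring n q f ∧ IsAperiodic n q f} : ℤ)
        = ∑ j ∈ n.divisors, (moebius j : ℤ) * ((q : ℤ) - 1) ^ (n / j) ∧
    (n : ℤ) * (Nat.card (Quot (fun a b :
        {f : ZMod n → Fin q // IsProperColoring n q f ∧ IsAperiodic n q f} =>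
          RotEquiv n q a.1 b.1)) : ℤ)
        = ∑ j ∈ n.divisors, (moebius j : ℤ) * ((q : ℤ) - 1) ^ (n / j) := by
  have : NeZero n := ⟨by omega⟩
  refine ⟨card_aperiodic_properColoring hn, ?_⟩
  rw [← card_aperiodic_properColoring hn, card_aperiodic_properColoring_eq_card_quot_mul,
    Nat.cast_mul, mul_comm]

open ArithmeticFunction in
/-- For `q ≥ 2` and `n ≥ 3`, the number of aperiodic proper
`q`-colorings of the cycle `C_n` equals `∑_{j ∣ n} μ(j)(q−1)^(n/j)`;
equivalently, `n` times the number of rotation classes of such colorings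
equals this sum. -/
theorem aperiodic_proper_colorings_count (q n : ℕ) (hq : 2 ≤ q) (hn : 3 ≤ n) :
    (Nat.card {f : ZMod n → Fin q // IsProperColoring n q f ∧ IsAperiodic n q f} : ℤ)
        = ∑ j ∈ n.divisors, (moebius j : ℤ) * ((q : ℤ) - 1) ^ (n / j) ∧
    (n : ℤ) * (Nat.card (Quot (fun a b :
        {f : ZMod n → Fin q // IsProperColoring n q f ∧ IsAperiodic n q f} =>
          RotEquiv n q a.1 b.1)) : ℤ)
        = ∑ j ∈ n.divisors, (moebius j : ℤ) * ((q : ℤ) - 1) ^ (n / j) :=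
  aperiodic_proper_colorings_count_general q n hn
end
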